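/- arXiv:1901.07133 — 7 statements merged into one kernel-verified Lean document; each statement's English description precedes it below -/
import Mathlib

section
/- Let G be a finite group, let R be a Cayley subset of G, and suppose Γ := Cay(G,R) is a GRR for G. Then |Γ[R]_I| ≤ 1 or |Γᶜ[Rᶜ]_I| ≤ 1. Moreover, if |G| > 2, then either G = ⟨R ∖ Γ[R]_I⟩ and |Γ[R]_I| ≤ 1, or G = ⟨Rᶜ ∖ Γᶜ[Rᶜ]_I⟩ and |Γᶜ[Rᶜ]_I| ≤ 1. -/
/-- A permutation `σ` of the vertex set is an automorphism of the simple graph `Γ`. -/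
def IsGraphAut {V : Type*} (Γ : SimpleGraph V) (σ : Equiv.Perm V) : Prop :=
  ∀ u v : V, Γ.Adj (σ u) (σ v) ↔ Γ.Adj u v

/-- The Cayley graph `Cay(G,R)`: `g` and `h` are adjacent iff `h * g⁻¹ ∈ R`
(for a Cayley subset `R`, i.e. `1 ∉ R = R⁻¹`). -/
def Cay (G : Type*) [Group G] (R : Set G) : SimpleGraph G :=
  SimpleGraph.fromRel (fun g h => h * g⁻¹ ∈ R)

/-- `Cay(G,R)` is a GRR for `G`: every automorphism is a right translation. -/
def IsCayleyGRR (G : Type*) [Group G] (R : Set G) : Prop :=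
  ∀ σ : Equiv.Perm G, IsGraphAut (Cay G R) σ → ∃ g : G, ∀ h : G, σ h = h * g

/-- `Γ[X]_I` for `Γ = Cay(G,R)` and `X = R`: the set of isolated vertices of the
subgraph of `Cay(G,R)` induced on `R`. -/
def cayIso (G : Type*) [Group G] (R : Set G) : Set G :=
  {v : G | v ∈ R ∧ ∀ u ∈ R, ¬ (Cay G R).Adj v u}

/-- The "complement" connection set `Rᶜ = G ∖ ({1} ∪ R)`. -/
def Rcompl (G : Type*) [Group G] (R : Set G) : Set G :=
  ({1} ∪ R)ᶜ

/-!
A graph automorphism of `Cay(G,R)` that fixes `1` is the identity when `Cay(G,R)` is a GRR, and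
`Cay(G,Rᶜ)` is the complement graph, with the same automorphisms. Every configuration to be
excluded is excluded by exhibiting such an automorphism: the transposition of two twins, a product
of two transpositions, or a group automorphism preserving `R`.

An isolated vertex `a` of `Γ[R]` has its neighbourhood `R a` inside `{1} ∪ Rᶜ`, and two such
vertices are not twins, so two of them force `|R| ≤ |Rᶜ|`. If both `R` and `Rᶜ` had two, then
`|R| = |Rᶜ|`, the neighbourhood of each of the four vertices misses exactly one vertex of
`{1} ∪ Rᶜ` (resp. `{1} ∪ R`), and the missed vertices pair them into a double transposition.

For the second part, a GRR generates `G` (otherwise translate a single coset of `⟨R⟩`), and no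
group of order `3`, `4` or `6` has one (one of `R`, `Rᶜ` has valency at most two). If `Rᶜ` has a
single isolated vertex `c`, `H = ⟨Rᶜ ∖ {c}⟩` is proper and `R` has an isolated vertex, then
`|G| ≤ 2 |H| + 2`, so `H` has index two and `R` is `Hᶜ ∖ {c}`, possibly with one involution of `H`
commuting with `c` added. In both cases `(x y) (c x  c y)` is an automorphism for suitable
`x, y ∈ H`.
-/

open Equiv

section GraphAut
variable {V : Type*} {Γ : SimpleGraph V}

lemma isGraphAut_of_isGraphAut_compl {σ : Perm V} (h : IsGraphAut Γᶜ σ) : IsGraphAut Γ σ := by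
  intro u v
  have huv := h u v
  simp only [SimpleGraph.compl_adj, σ.injective.ne_iff] at huv
  by_cases hne : u = v
  · simp [hne]
  · simpa [hne, not_iff_not] using huv

lemma isGraphAut_swap [DecidableEq V] {a b : V}
    (h : ∀ w, w ≠ a → w ≠ b → (Γ.Adj w a ↔ Γ.Adj w b)) : IsGraphAut Γ (swap a b) := by
  intro u v
  have := h u
  have := h v
  simp only [swap_apply_def]
  split_ifs <;> subst_vars <;> simp_all [Γ.adj_comm]

lemma isGraphAut_swap_mul_swap [DecidableEq V] {a b c d : V}
    (hac : a ≠ c) (had : a ≠ d) (hbc : b ≠ c) (hbd : b ≠ d)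
    (hab : ∀ w, w ≠ a → w ≠ b → w ≠ c → w ≠ d → (Γ.Adj w a ↔ Γ.Adj w b))
    (hcd : ∀ w, w ≠ a → w ≠ b → w ≠ c → w ≠ d → (Γ.Adj w c ↔ Γ.Adj w d))
    (h₁ : Γ.Adj a c ↔ Γ.Adj b d) (h₂ : Γ.Adj a d ↔ Γ.Adj b c) :
    IsGraphAut Γ (swap a b * swap c d) := by
  intro u v
  have := hab u
  have := hab v
  have := hcd u
  have := hcd v
  simp only [Perm.mul_apply, swap_apply_def]
  split_ifs <;> subst_vars <;> simp_all [Γ.adj_comm]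

end GraphAut

lemma Set.exists_mem_ne_ne_of_two_lt_ncard {α : Type*} {s : Set α} (hs : 2 < s.ncard)
    (a b : α) : ∃ x ∈ s, x ≠ a ∧ x ≠ b := by
  have hpos : 0 < (s \ {a, b}).ncard := by
    have h₁ := Set.le_ncard_sdiff {a, b} s
    have h₂ : ({a, b} : Set α).ncard ≤ 2 := (Set.ncard_insert_le a {b}).trans (by simp)
    omega
  obtain ⟨x, hx, hxab⟩ := Set.nonempty_of_ncard_ne_zero hpos.ne'
  exact ⟨x, hx, by simp_all [not_or]⟩

lemma Subgroup.exists_mem_ne_ne {G : Type*} [Group G] (H : Subgroup G) (h3 : 2 < Nat.card H)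
    (a b : G) : ∃ x ∈ H, x ≠ a ∧ x ≠ b :=
  Set.exists_mem_ne_ne_of_two_lt_ncard (Nat.card_coe_set_eq (H : Set G) ▸ h3) a b

section Generation
variable {G : Type*} [Group G]

lemma card_le_two_of_closure_eq_top_of_ncard_le_one [Finite G] {X : Set G}
    (hX : ∀ x ∈ X, x⁻¹ ∈ X) (h1 : X.ncard ≤ 1) (htop : Subgroup.closure X = ⊤) :
    Nat.card G ≤ 2 := by
  rw [← Subgroup.card_top (G := G), ← htop]
  obtain rfl | ⟨z, rfl⟩ := (Set.ncard_le_one_iff_eq X.toFinite).1 h1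
  · simp
  · have hz : z⁻¹ = z := by simpa using hX z rfl
    rw [← Subgroup.zpowers_eq_closure, Nat.card_zpowers]
    exact orderOf_le_of_pow_eq_one two_pos (by rw [sq, mul_eq_one_iff_eq_inv, hz])

lemma mul_comm_of_closure_eq_top {X : Set G} (hX : ∀ x ∈ X, ∀ y ∈ X, x * y = y * x)
    (htop : Subgroup.closure X = ⊤) (a b : G) : a * b = b * a :=
  have hle := htop ▸ Subgroup.closure_le_centralizer_centralizer X
  Set.centralizer_centralizer_comm_of_comm hX a (hle trivial) b (hle trivial)

lemma orderOf_mul_eq_three_of_card_eq_six [Finite G] (hn : Nat.card G = 6) {x y : G}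
    (hx : x⁻¹ = x) (hy : y⁻¹ = y) (hxy : x * y ≠ y * x) : orderOf (x * y) = 3 := by
  have hdvd : orderOf (x * y) ∣ 6 := hn ▸ orderOf_dvd_natCard _
  have h1 : orderOf (x * y) ≠ 1 := fun h1 => hxy (by
    obtain rfl : x = y := hy ▸ mul_eq_one_iff_eq_inv.1 (orderOf_eq_one_iff.1 h1)
    rfl)
  have h2 : orderOf (x * y) ≠ 2 := fun h2 => hxy (by
    have := pow_orderOf_eq_one (x * y)
    rwa [h2, sq, mul_eq_one_iff_eq_inv, mul_inv_rev, hx, hy] at this)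
  have h6 : orderOf (x * y) ≠ 6 := fun h6 => hxy (by
    refine mul_comm_of_closure_eq_top (X := {x * y}) (by simp) ?_ x y
    rw [← Subgroup.zpowers_eq_closure]
    exact Subgroup.eq_top_of_card_eq _ (by rw [Nat.card_zpowers, h6, hn]))
  have := Nat.le_of_dvd (by norm_num) hdvd
  interval_cases orderOf (x * y) <;> simp_all

end Generation

structure IsCayleySubset {G : Type*} [Group G] (R : Set G) : Prop where
  one_notMem : (1 : G) ∉ R
  inv_mem : ∀ r ∈ R, r⁻¹ ∈ R

lemma mem_Rcompl {G : Type*} [Group G] {R : Set G} {x : G} :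
    x ∈ Rcompl G R ↔ x ≠ 1 ∧ x ∉ R := by
  simp [Rcompl, not_or]

namespace IsCayleySubset
variable {G : Type*} [Group G] {R : Set G}

lemma inv_mem_iff (hR : IsCayleySubset R) {r : G} : r⁻¹ ∈ R ↔ r ∈ R :=
  ⟨fun h => inv_inv r ▸ hR.inv_mem _ h, hR.inv_mem r⟩

lemma ne_one (hR : IsCayleySubset R) {r : G} (h : r ∈ R) : r ≠ 1 :=
  fun h1 => hR.one_notMem (h1 ▸ h)

lemma cay_adj (hR : IsCayleySubset R) {u v : G} : (Cay G R).Adj u v ↔ v * u⁻¹ ∈ R := by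
  rw [Cay, SimpleGraph.fromRel_adj, ← hR.inv_mem_iff (r := v * u⁻¹), mul_inv_rev, inv_inv,
    or_self, and_iff_right_iff_imp]
  rintro h rfl
  exact hR.one_notMem (by simpa using h)

lemma isGraphAut_cay_iff (hR : IsCayleySubset R) {σ : Perm G} :
    IsGraphAut (Cay G R) σ ↔ ∀ u v, σ v * (σ u)⁻¹ ∈ R ↔ v * u⁻¹ ∈ R := by
  simp only [IsGraphAut, hR.cay_adj]

lemma rcompl (hR : IsCayleySubset R) : IsCayleySubset (Rcompl G R) where
  one_notMem := by simp [mem_Rcompl]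
  inv_mem r := by simp [mem_Rcompl, hR.inv_mem_iff]

lemma rcompl_rcompl (hR : IsCayleySubset R) : Rcompl G (Rcompl G R) = R := by
  ext x
  simp only [mem_Rcompl, not_and, not_not]
  exact ⟨fun h => h.2 h.1, fun h => ⟨hR.ne_one h, fun _ => h⟩⟩

lemma cay_rcompl (hR : IsCayleySubset R) : Cay G (Rcompl G R) = (Cay G R)ᶜ := by
  ext u v
  rw [hR.rcompl.cay_adj, SimpleGraph.compl_adj, hR.cay_adj, mem_Rcompl, Ne, mul_inv_eq_one,
    eq_comm]

lemma mem_cayIso_iff (hR : IsCayleySubset R) {a : G} :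
    a ∈ cayIso G R ↔ a ∈ R ∧ ∀ u ∈ R, u * a⁻¹ ∉ R := by
  simp only [cayIso, Set.mem_ofPred_eq, hR.cay_adj]

lemma inv_mem_cayIso (hR : IsCayleySubset R) {a : G} (ha : a ∈ cayIso G R) :
    a⁻¹ ∈ cayIso G R := by
  rw [hR.mem_cayIso_iff] at ha ⊢
  refine ⟨hR.inv_mem a ha.1, fun u hu hua => ha.2 (u * a) ?_ (by simpa using hu)⟩
  simpa using hua

lemma neighborSet_cay (hR : IsCayleySubset R) (a : G) :
    (Cay G R).neighborSet a = (· * a) '' R := by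
  ext w
  simp [hR.cay_adj]

lemma ncard_neighborSet_cay (hR : IsCayleySubset R) (a : G) :
    ((Cay G R).neighborSet a).ncard = R.ncard := by
  rw [hR.neighborSet_cay, Set.ncard_image_of_injective _ (mul_left_injective a)]

variable [Finite G]

lemma ncard_add_ncard_rcompl (hR : IsCayleySubset R) :
    1 + R.ncard + (Rcompl G R).ncard = Nat.card G := by
  rw [← Set.ncard_add_ncard_compl ({1} ∪ R), Set.ncard_union_eq (by simpa using hR.one_notMem),
    Set.ncard_singleton]
  rfl

lemma ncard_compl (hR : IsCayleySubset R) : Rᶜ.ncard = (Rcompl G R).ncard + 1 := by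
  have := Set.ncard_add_ncard_compl R
  have := hR.ncard_add_ncard_rcompl
  omega

end IsCayleySubset

namespace IsCayleyGRR
variable {G : Type*} [Group G] {R : Set G}

lemma apply_eq_self (h : IsCayleyGRR G R) {σ : Perm G} (hσ : IsGraphAut (Cay G R) σ)
    (h1 : σ 1 = 1) (x : G) : σ x = x := by
  obtain ⟨g, hg⟩ := h σ hσ
  have hg1 : g = 1 := by simpa [h1] using (hg 1).symm
  simpa [hg1] using hg x

lemma rcompl (h : IsCayleyGRR G R) (hR : IsCayleySubset R) : IsCayleyGRR G (Rcompl G R) :=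
  fun σ hσ => h σ (isGraphAut_of_isGraphAut_compl (hR.cay_rcompl ▸ hσ))

lemma not_twins (h : IsCayleyGRR G R) {u v : G} (hu : u ≠ 1) (hv : v ≠ 1) (huv : u ≠ v)
    (htw : ∀ w, w ≠ u → w ≠ v → ((Cay G R).Adj w u ↔ (Cay G R).Adj w v)) : False := by
  classical
  have hfix := h.apply_eq_self (isGraphAut_swap htw) (swap_apply_of_ne_of_ne hu.symm hv.symm) u
  exact huv (swap_apply_left u v ▸ hfix).symm

lemma not_twin_pairs (h : IsCayleyGRR G R) {a b c d : G} (ha : a ≠ 1) (hb : b ≠ 1)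
    (hc : c ≠ 1) (hd : d ≠ 1) (hab : a ≠ b) (hac : a ≠ c) (had : a ≠ d) (hbc : b ≠ c)
    (hbd : b ≠ d)
    (htw : ∀ w, w ≠ a → w ≠ b → w ≠ c → w ≠ d →
      ((Cay G R).Adj w a ↔ (Cay G R).Adj w b) ∧ ((Cay G R).Adj w c ↔ (Cay G R).Adj w d))
    (h₁ : (Cay G R).Adj a c ↔ (Cay G R).Adj b d) (h₂ : (Cay G R).Adj a d ↔ (Cay G R).Adj b c) :
    False := by
  classical
  have hσ := isGraphAut_swap_mul_swap hac had hbc hbd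
    (fun w h₁ h₂ h₃ h₄ => (htw w h₁ h₂ h₃ h₄).1) (fun w h₁ h₂ h₃ h₄ => (htw w h₁ h₂ h₃ h₄).2) h₁ h₂
  have hfix := h.apply_eq_self hσ (by simp [swap_apply_of_ne_of_ne, *, Ne.symm]) a
  simp [swap_apply_of_ne_of_ne, hac, had] at hfix
  exact hab hfix.symm

lemma mulEquiv_apply_eq (h : IsCayleyGRR G R) (hR : IsCayleySubset R) (φ : G ≃* G)
    (hφ : ∀ r, φ r ∈ R ↔ r ∈ R) (g : G) : φ g = g :=
  h.apply_eq_self (σ := φ.toEquiv)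
    (hR.isGraphAut_cay_iff.2 fun u v => by simpa [map_mul, map_inv] using hφ (v * u⁻¹))
    (map_one φ) g

lemma inv_eq_self_of_mul_comm (h : IsCayleyGRR G R) (hR : IsCayleySubset R)
    (hcomm : ∀ a b : G, a * b = b * a) (g : G) : g⁻¹ = g :=
  h.mulEquiv_apply_eq hR ⟨Equiv.inv G, fun a b => by simp [mul_inv_rev, hcomm a⁻¹]⟩
    (fun _ => hR.inv_mem_iff) g

lemma closure_eq_top (h : IsCayleyGRR G R) (hR : IsCayleySubset R) (hn : 2 < Nat.card G) :
    Subgroup.closure R = ⊤ := by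
  classical
  have huniv : 2 < (Set.univ : Set G).ncard := by rwa [Set.ncard_univ]
  obtain rfl | ⟨m, hm⟩ := R.eq_empty_or_nonempty
  · obtain ⟨u, -, hu, -⟩ := Set.exists_mem_ne_ne_of_two_lt_ncard huniv 1 1
    obtain ⟨v, -, hv, hvu⟩ := Set.exists_mem_ne_ne_of_two_lt_ncard huniv 1 u
    exact (h.not_twins hu hv hvu.symm fun w _ _ => by simp [hR.cay_adj]).elim
  by_contra hK
  set K := Subgroup.closure R
  obtain ⟨g, hg⟩ : ∃ g, g ∉ K := by simpa [Subgroup.eq_top_iff'] using hK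
  have hmK : m ∈ K := Subgroup.subset_closure hm
  have hRK : ∀ x, x ∉ K → x ∉ R := fun x hx hxR => hx (Subgroup.subset_closure hxR)
  -- right translation by `m` on the vertices outside `K`, which no edge joins to `K`
  let σ : Perm G :=
    { toFun := fun v => if v ∈ K then v else v * m
      invFun := fun v => if v ∈ K then v else v * m⁻¹
      left_inv := fun v => by by_cases hv : v ∈ K <;> simp [hv, K.mul_mem_cancel_right hmK]
      right_inv := fun v => by
        by_cases hv : v ∈ K <;> simp [hv, K.mul_mem_cancel_right (K.inv_mem hmK)] }
  have hσ : IsGraphAut (Cay G R) σ := by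
    refine hR.isGraphAut_cay_iff.2 fun u v => ?_
    by_cases hu : u ∈ K <;> by_cases hv : v ∈ K
    · simp [σ, hu, hv]
    · refine iff_of_false (hRK _ ?_) (hRK _ ?_) <;>
        simp [σ, hu, hv, K.mul_mem_cancel_right (K.inv_mem hu), K.mul_mem_cancel_right hmK]
    · refine iff_of_false (hRK _ ?_) (hRK _ ?_) <;>
        simp [σ, hu, hv, K.mul_mem_cancel_left hv, K.mul_mem_cancel_left (K.inv_mem hmK)]
    · simp [σ, hu, hv, mul_assoc]
  have hfix : g * m = g := by simpa [σ, hg] using h.apply_eq_self hσ (if_pos K.one_mem) g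
  exact hR.ne_one hm (mul_eq_left.1 hfix)

variable [Finite G]

lemma four_lt_card (h : IsCayleyGRR G R) (hR : IsCayleySubset R) (hn : 2 < Nat.card G) :
    4 < Nat.card G := by
  by_contra! h4
  have hsum := hR.ncard_add_ncard_rcompl
  rcases le_or_gt R.ncard 1 with hr | hr
  · have := card_le_two_of_closure_eq_top_of_ncard_le_one hR.inv_mem hr (h.closure_eq_top hR hn)
    omega
  · have := card_le_two_of_closure_eq_top_of_ncard_le_one hR.rcompl.inv_mem (by omega)
      ((h.rcompl hR).closure_eq_top hR.rcompl hn)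
    omega

lemma not_mul_comm_of_card_eq_six (h : IsCayleyGRR G R) (hR : IsCayleySubset R)
    (hn : Nat.card G = 6) : ¬ ∀ a b : G, a * b = b * a := by
  intro hcomm
  have : Fact (Nat.Prime 3) := ⟨Nat.prime_three⟩
  obtain ⟨g, hg⟩ := exists_prime_orderOf_dvd_card' (G := G) 3 (by rw [hn]; norm_num)
  have hg2 : g ^ 2 = 1 := by rw [sq, mul_eq_one_iff_eq_inv, h.inv_eq_self_of_mul_comm hR hcomm]
  have := orderOf_dvd_of_pow_eq_one hg2
  rw [hg] at this
  norm_num at this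

/-- The two elements of `R` are involutions whose product has order three, so conjugation by
`x * y * x` exchanges them. -/
lemma false_of_card_eq_six_of_ncard_le_two (h : IsCayleyGRR G R) (hR : IsCayleySubset R)
    (hn : Nat.card G = 6) (h2 : R.ncard ≤ 2) : False := by
  have htop := h.closure_eq_top hR (by omega)
  have hnc : ¬ ∀ x ∈ R, ∀ y ∈ R, x * y = y * x := fun hc =>
    h.not_mul_comm_of_card_eq_six hR hn (mul_comm_of_closure_eq_top hc htop)
  rcases lt_or_ge R.ncard 2 with h1 | h2'
  · have := card_le_two_of_closure_eq_top_of_ncard_le_one hR.inv_mem (by omega) htop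
    omega
  obtain ⟨x, y, hxy, rfl⟩ := Set.ncard_eq_two.1 (le_antisymm h2 h2')
  obtain ⟨hx, hy⟩ : x⁻¹ = x ∧ y⁻¹ = y := by
    rcases hR.inv_mem x (by simp) with hx | rfl
    · rcases hR.inv_mem y (by simp) with rfl | hy
      · exact (hnc (by simp)).elim
      · exact ⟨hx, hy⟩
    · exact (hnc (by simp)).elim
  have hcomm : x * y ≠ y * x := fun hc => hnc (by simp [hc])
  have hx2 : x * x = 1 := mul_eq_one_iff_eq_inv.2 hx.symm
  have hxx : ∀ z, x * (x * z) = z := fun z => by rw [← mul_assoc, hx2, one_mul]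
  have hyy : ∀ z, y * (y * z) = z := fun z => by
    rw [← mul_assoc, mul_eq_one_iff_eq_inv.2 hy.symm, one_mul]
  have hord := orderOf_mul_eq_three_of_card_eq_six hn hx hy hcomm
  have hxyx : x * (y * (x * (y * x))) = y := by
    have := pow_orderOf_eq_one (x * y)
    rw [hord, pow_succ, sq, mul_eq_one_iff_eq_inv, mul_inv_rev, hx, hy] at this
    calc x * (y * (x * (y * x))) = x * y * (x * y) * x := by simp only [mul_assoc]
      _ = y := by rw [this, mul_assoc, hx2, mul_one]
  let φ := MulAut.conj (x * y * x)
  have hφ : ∀ r, φ (φ r) = r := fun r => by simp [φ, mul_assoc, hx, hy, hx2, hxx, hyy]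
  have hφx : φ x = y := by simp [φ, mul_assoc, hx, hy, hxx, hxyx]
  have hφy : φ y = x := by rw [← hφx, hφ]
  refine hxy (hφx ▸ h.mulEquiv_apply_eq hR φ (fun r => ?_) x).symm
  constructor
  · rintro (hr | hr) <;> [rw [← hφ r, hr, hφx]; rw [← hφ r, hr, hφy]] <;> simp
  · rintro (rfl | rfl) <;> simp [hφx, hφy]

lemma card_ne_six (h : IsCayleyGRR G R) (hR : IsCayleySubset R) : Nat.card G ≠ 6 := by
  intro hn
  have hsum := hR.ncard_add_ncard_rcompl
  rcases le_or_gt R.ncard 2 with hr | hr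
  · exact h.false_of_card_eq_six_of_ncard_le_two hR hn hr
  · exact (h.rcompl hR).false_of_card_eq_six_of_ncard_le_two hR.rcompl hn (by omega)

end IsCayleyGRR

section Isolated
variable {G : Type*} [Group G] {R : Set G}

lemma neighborSet_subset_compl_of_mem_cayIso {a : G} (ha : a ∈ cayIso G R) :
    (Cay G R).neighborSet a ⊆ Rᶜ :=
  fun w hw hwR => ha.2 w hwR hw

lemma IsCayleySubset.exists_adj_iff_of_mem_cayIso [Finite G] (hR : IsCayleySubset R)
    (hcard : R.ncard = (Rcompl G R).ncard) {a : G} (ha : a ∈ cayIso G R) :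
    ∃ s ∈ Rcompl G R, ∀ w, (Cay G R).Adj a w ↔ w ∉ R ∧ w ≠ s := by
  have hN := neighborSet_subset_compl_of_mem_cayIso ha
  obtain ⟨s, hs⟩ : ∃ s, Rᶜ \ (Cay G R).neighborSet a = {s} := by
    rw [← Set.ncard_eq_one, Set.ncard_sdiff hN, hR.ncard_compl, hR.ncard_neighborSet_cay, hcard]
    omega
  obtain ⟨hsR, hsN⟩ : s ∈ Rᶜ \ (Cay G R).neighborSet a := by rw [hs]; rfl
  refine ⟨s, mem_Rcompl.2 ⟨fun hs1 => hsN ?_, hsR⟩, fun w => ⟨fun hw => ⟨hN hw, ?_⟩, ?_⟩⟩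
  · simpa [hs1, hR.cay_adj] using hR.inv_mem a ha.1
  · rintro rfl
    exact hsN hw
  · rintro ⟨hwR, hws⟩
    by_contra hw
    exact hws (Set.eq_of_mem_singleton (hs ▸ ⟨hwR, hw⟩ : w ∈ _))

/-- `x ∈ R` and `z ∈ Rᶜ` are adjacent in `Cay(G,R)` iff `z ≠ s`, and in the complementary graph
`Cay(G,Rᶜ)` iff `x ≠ r`. -/
lemma IsCayleySubset.ne_iff_eq_of_adj_iff (hR : IsCayleySubset R) {x s z r : G} (hx : x ∈ R)
    (hz : z ∈ Rcompl G R) (hNx : ∀ w, (Cay G R).Adj x w ↔ w ∉ R ∧ w ≠ s)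
    (hNz : ∀ w, (Cay G (Rcompl G R)).Adj z w ↔ w ∉ Rcompl G R ∧ w ≠ r) :
    z ≠ s ↔ x = r := by
  have hzx := hNz x
  rw [hR.cay_rcompl, SimpleGraph.compl_adj, (Cay G R).adj_comm, hNx] at hzx
  have hxz : z ≠ x := fun hzx => (mem_Rcompl.1 hz).2 (hzx ▸ hx)
  have hxS : x ∉ Rcompl G R := fun hxS => (mem_Rcompl.1 hxS).2 hx
  simp only [(mem_Rcompl.1 hz).2, hxz, hxS, not_false_eq_true, true_and, ne_eq] at hzx
  tauto

lemma IsCayleyGRR.false_of_missing_neighbors (h : IsCayleyGRR G R) (hR : IsCayleySubset R)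
    {a b c d : G} (ha : a ∈ R) (hb : b ∈ R) (hc : c ∈ Rcompl G R) (hd : d ∈ Rcompl G R)
    (hab : a ≠ b) (hcd : c ≠ d)
    (hNa : ∀ w, (Cay G R).Adj a w ↔ w ∉ R ∧ w ≠ c)
    (hNb : ∀ w, (Cay G R).Adj b w ↔ w ∉ R ∧ w ≠ d)
    (hNc : ∀ w, (Cay G (Rcompl G R)).Adj c w ↔ w ∉ Rcompl G R ∧ w ≠ b)
    (hNd : ∀ w, (Cay G (Rcompl G R)).Adj d w ↔ w ∉ Rcompl G R ∧ w ≠ a) : False := by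
  rw [hR.cay_rcompl] at hNc hNd
  have hne : ∀ x ∈ R, ∀ z ∈ Rcompl G R, x ≠ z := fun x hx z hz hxz =>
    (mem_Rcompl.1 hz).2 (hxz ▸ hx)
  refine h.not_twin_pairs (hR.ne_one ha) (hR.ne_one hb) (mem_Rcompl.1 hc).1 (mem_Rcompl.1 hd).1
    hab (hne a ha c hc) (hne a ha d hd) (hne b hb c hc) (hne b hb d hd)
    (fun w hwa hwb hwc hwd => ⟨?_, ?_⟩) (by simp [hNa, hNb])
    (by simp [hNa, hNb, (mem_Rcompl.1 hc).2, (mem_Rcompl.1 hd).2, hcd, hcd.symm])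
  · rw [(Cay G R).adj_comm w a, (Cay G R).adj_comm w b, hNa, hNb]
    simp [hwc, hwd]
  · have hc' := hNc w
    have hd' := hNd w
    simp only [SimpleGraph.compl_adj, (Cay G R).adj_comm c, (Cay G R).adj_comm d] at hc' hd'
    simp only [Ne.symm hwc, Ne.symm hwd, hwa, hwb, ne_eq, not_false_eq_true, true_and,
      and_true] at hc' hd'
    rw [not_iff_not.1 hc', not_iff_not.1 hd']

variable [Finite G]

lemma IsCayleyGRR.ncard_le_ncard_rcompl (h : IsCayleyGRR G R) (hR : IsCayleySubset R)
    {a b : G} (ha : a ∈ cayIso G R) (hb : b ∈ cayIso G R) (hab : a ≠ b) :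
    R.ncard ≤ (Rcompl G R).ncard := by
  suffices R.ncard < Rᶜ.ncard by
    have := hR.ncard_compl
    omega
  refine lt_of_le_of_ne ?_ fun heq => ?_
  · exact hR.ncard_neighborSet_cay a ▸
      Set.ncard_le_ncard (neighborSet_subset_compl_of_mem_cayIso ha)
  · have hN : ∀ x ∈ cayIso G R, (Cay G R).neighborSet x = Rᶜ := fun x hx =>
      Set.eq_of_subset_of_ncard_le (neighborSet_subset_compl_of_mem_cayIso hx)
        (by rw [← heq, hR.ncard_neighborSet_cay])
    refine h.not_twins (hR.ne_one ha.1) (hR.ne_one hb.1) hab fun w _ _ => ?_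
    rw [(Cay G R).adj_comm w, (Cay G R).adj_comm w, ← SimpleGraph.mem_neighborSet,
      ← SimpleGraph.mem_neighborSet, hN a ha, hN b hb]

theorem IsCayleyGRR.ncard_cayIso_le_one_or (h : IsCayleyGRR G R) (hR : IsCayleySubset R) :
    (cayIso G R).ncard ≤ 1 ∨ (cayIso G (Rcompl G R)).ncard ≤ 1 := by
  by_contra! ⟨hA, hB⟩
  have hSS : Rcompl G (Rcompl G R) = R := hR.rcompl_rcompl
  obtain ⟨a, b, ha, hb, hab⟩ := (Set.one_lt_ncard_iff (Set.toFinite _)).1 hA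
  obtain ⟨c, d, hc, hd, hcd⟩ := (Set.one_lt_ncard_iff (Set.toFinite _)).1 hB
  have hcard : R.ncard = (Rcompl G R).ncard := le_antisymm (h.ncard_le_ncard_rcompl hR ha hb hab)
    (by simpa only [hSS] using (h.rcompl hR).ncard_le_ncard_rcompl hR.rcompl hc hd hcd)
  obtain ⟨sa, -, hNa⟩ := hR.exists_adj_iff_of_mem_cayIso hcard ha
  obtain ⟨sb, -, hNb⟩ := hR.exists_adj_iff_of_mem_cayIso hcard hb
  have hmissS : ∀ z ∈ cayIso G (Rcompl G R), ∃ r ∈ R,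
      ∀ w, (Cay G (Rcompl G R)).Adj z w ↔ w ∉ Rcompl G R ∧ w ≠ r := fun z hz => by
    simpa only [hSS] using hR.rcompl.exists_adj_iff_of_mem_cayIso (by rw [hSS, hcard]) hz
  obtain ⟨rc, -, hNc⟩ := hmissS c hc
  obtain ⟨rd, -, hNd⟩ := hmissS d hd
  have hmiss : ∀ z r, z ∈ cayIso G (Rcompl G R) →
      (∀ w, (Cay G (Rcompl G R)).Adj z w ↔ w ∉ Rcompl G R ∧ w ≠ r) → z = sa ∨ z = sb := by
    intro z r hz hNz
    by_contra! hne
    exact hab (((hR.ne_iff_eq_of_adj_iff ha.1 hz.1 hNa hNz).1 hne.1).trans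
      ((hR.ne_iff_eq_of_adj_iff hb.1 hz.1 hNb hNz).1 hne.2).symm)
  wlog hca : c = sa generalizing a b sa sb
  · exact this b a hb ha hab.symm sb hNb sa hNa (fun z r hz hNz => (hmiss z r hz hNz).symm)
      ((hmiss c rc hc hNc).resolve_left hca)
  have hdb : d = sb := (hmiss d rd hd hNd).resolve_left (hca ▸ hcd.symm)
  obtain rfl : b = rc := (hR.ne_iff_eq_of_adj_iff hb.1 hc.1 hNb hNc).1 (hdb ▸ hcd)
  obtain rfl : a = rd := (hR.ne_iff_eq_of_adj_iff ha.1 hd.1 hNa hNd).1 (hca ▸ hcd.symm)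
  subst hca hdb
  exact h.false_of_missing_neighbors hR ha.1 hb.1 hc.1 hd.1 hab hcd hNa hNb hNc hNd

end Isolated

section IndexTwo
variable {G : Type*} [Group G] {R : Set G} {H : Subgroup G}

/-- The double transposition `(x y) (c * x  c * y)` is a graph automorphism. -/
lemma IsCayleyGRR.false_of_index_two (h : IsCayleyGRR G R) (hR : IsCayleySubset R)
    (hH : H.index = 2) {c x y : G} (hc : c ∉ H) (hcc : c * c = 1)
    (hRc : ∀ v ∉ H, v ∈ R ↔ v ≠ c) (hconj : ∀ z ∈ H, c * z * c ∈ R ↔ z ∈ R)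
    (hx : x ∈ H) (hy : y ∈ H) (hx1 : x ≠ 1) (hy1 : y ≠ 1) (hxy : x ≠ y)
    (hxyR : ∀ w ∈ H, w ≠ x → w ≠ y → (x * w⁻¹ ∈ R ↔ y * w⁻¹ ∈ R)) : False := by
  have hmem : ∀ a b : G, a * b ∈ H ↔ (a ∈ H ↔ b ∈ H) := fun a b =>
    Subgroup.mul_mem_iff_of_index_two hH
  have hcinv : c⁻¹ = c := (eq_inv_of_mul_eq_one_left hcc).symm
  have hne : ∀ u v, u ∈ H → v ∉ H → u ≠ v := fun u v hu hv huv => hv (huv ▸ hu)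
  have hcH : ∀ u ∈ H, c * u ∉ H := fun u hu => by simp [hmem, hc, hu]
  have hcoset : ∀ u ∈ H, ∀ w ∈ H, c * u * w⁻¹ ∈ R ↔ u ≠ w := fun u hu w hw => by
    rw [hRc _ (by simp [hmem, hc, hu, hw]), Ne, mul_assoc, mul_eq_left, mul_inv_eq_one]
  have hout : ∀ u ∈ H, ∀ w ∉ H, u * w⁻¹ ∈ R ↔ w ≠ c * u := fun u hu w hw => by
    rw [hRc _ (by simp [hmem, hu, hw]), Ne, Ne, mul_inv_eq_iff_eq_mul]
    constructor <;> rintro h₁ rfl <;> simp [← mul_assoc, hcc] at h₁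
  refine h.not_twin_pairs (a := x) (b := y) (c := c * x) (d := c * y) hx1 hy1
    (hne _ _ H.one_mem (hcH x hx)).symm (hne _ _ H.one_mem (hcH y hy)).symm hxy
    (hne _ _ hx (hcH x hx)) (hne _ _ hx (hcH y hy)) (hne _ _ hy (hcH x hx)) (hne _ _ hy (hcH y hy))
    (fun w hwx hwy hwcx hwcy => ?_) (by simp [hR.cay_adj])
    (by rw [hR.cay_adj, hR.cay_adj, hcoset y hy x hx, hcoset x hx y hy, ne_comm])
  simp only [hR.cay_adj]
  by_cases hw : w ∈ H
  · rw [hcoset x hx w hw, hcoset y hy w hw]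
    exact ⟨hxyR w hw hwx hwy, iff_of_true hwx.symm hwy.symm⟩
  · have hcw : c * w ∈ H := by simp [hmem, hc, hw]
    have hconj' : ∀ u, c * u * w⁻¹ = c * (u * (c * w)⁻¹) * c := fun u => by
      simp [mul_assoc, hcinv, hcc]
    refine ⟨by rw [hout x hx w hw, hout y hy w hw]; exact iff_of_true hwcx hwcy, ?_⟩
    rw [hconj', hconj', hconj _ (H.mul_mem hx (H.inv_mem hcw)),
      hconj _ (H.mul_mem hy (H.inv_mem hcw))]
    refine hxyR _ hcw (fun h₁ => hwcx ?_) (fun h₁ => hwcy ?_) <;> simp [← h₁, ← mul_assoc, hcc]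

lemma IsCayleySubset.eq_of_mem_cayIso_of_index_two (hR : IsCayleySubset R) (hH : H.index = 2)
    (h3 : 2 < Nat.card H) {c a : G} (hc : c ∉ H) (hRc : ∀ v ∉ H, v ∈ R ↔ v ≠ c)
    (ha : a ∈ cayIso G R) {d : G} (hd : d ∈ H) (hdR : d ∈ R) : d = c * a ∧ d * a = c := by
  have hmem : ∀ a b : G, a * b ∈ H ↔ (a ∈ H ↔ b ∈ H) := fun a b =>
    Subgroup.mul_mem_iff_of_index_two hH
  have hiso := (hR.mem_cayIso_iff.1 ha).2
  have haH : a ∉ H := by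
    intro haH
    obtain ⟨x, hx, hx1, hxa⟩ := H.exists_mem_ne_ne h3 1 a⁻¹
    refine hiso (c * x * a) ((hRc _ ?_).2 ?_) ((hRc _ ?_).2 ?_)
    · simp [hmem, hc, hx, haH]
    · rwa [Ne, mul_assoc, mul_eq_left, mul_eq_one_iff_eq_inv]
    · simp [hmem, hc, hx]
    · simpa [mul_assoc] using hx1
  constructor
  · by_contra hne
    refine hiso d hdR ((hRc _ (by simp [hmem, hd, haH])).2 fun e => hne ?_)
    rw [← e, inv_mul_cancel_right]
  · by_contra hne
    exact hiso (d * a) ((hRc _ (by simp [hmem, hd, haH])).2 hne) (by simpa using hdR)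

lemma IsCayleyGRR.false_of_index_two_of_inter_eq_singleton (h : IsCayleyGRR G R)
    (hR : IsCayleySubset R) (hH : H.index = 2) (h3 : 2 < Nat.card H) {c d : G} (hc : c ∉ H)
    (hcc : c * c = 1) (hRc : ∀ v ∉ H, v ∈ R ↔ v ≠ c) (hdH : d ∈ H)
    (hRH : ∀ v ∈ H, v ∈ R ↔ v = d) (hdd : d * d = 1) (hcd : c * d = d * c) : False := by
  have hdR : d ∈ R := (hRH d hdH).2 rfl
  have hcdc : c * d * c = d := by rw [hcd, mul_assoc, hcc, mul_one]
  obtain ⟨x, hx, hx1, hxd⟩ := H.exists_mem_ne_ne h3 1 d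
  refine h.false_of_index_two hR hH hc hcc hRc (fun z hz => ?_) hx (H.mul_mem hdH hx) hx1
    (fun e => hxd ?_) (fun e => hR.ne_one hdR (mul_eq_right.1 e.symm)) (fun w hw hwx hwdx => ?_)
  · rw [hRH _ (by simp [Subgroup.mul_mem_iff_of_index_two hH, hc, hz]), hRH z hz]
    refine ⟨fun e => ?_, by rintro rfl; exact hcdc⟩
    rw [← hcdc] at e
    exact mul_left_cancel (mul_right_cancel e)
  · rw [← inv_eq_of_mul_eq_one_right hdd]
    exact eq_inv_of_mul_eq_one_right e
  · rw [hRH _ (H.mul_mem hx (H.inv_mem hw)),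
      hRH _ (H.mul_mem (H.mul_mem hdH hx) (H.inv_mem hw))]
    refine iff_of_false (fun e => hwdx ?_) (fun e => hwx ?_)
    · rw [mul_inv_eq_iff_eq_mul] at e
      rw [e, ← mul_assoc, hdd, one_mul]
    · rwa [mul_assoc, mul_eq_left, mul_inv_eq_one, eq_comm] at e

lemma IsCayleyGRR.false_of_index_two_of_mem_cayIso (h : IsCayleyGRR G R)
    (hR : IsCayleySubset R) (hH : H.index = 2) (h3 : 2 < Nat.card H) {c a : G} (hc : c ∉ H)
    (hcc : c * c = 1) (hRc : ∀ v ∉ H, v ∈ R ↔ v ≠ c) (ha : a ∈ cayIso G R) : False := by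
  have hRH : ∀ d ∈ H, d ∈ R → d = c * a ∧ d * a = c := fun _ =>
    hR.eq_of_mem_cayIso_of_index_two hH h3 hc hRc ha
  by_cases hD : ∃ d ∈ H, d ∈ R
  · obtain ⟨d, hdH, hdR⟩ := hD
    obtain ⟨hd₁, hd₂⟩ := hRH d hdH hdR
    have hRH' : ∀ v ∈ H, v ∈ R ↔ v = d := fun v hv =>
      ⟨fun hvR => (hRH v hv hvR).1.trans hd₁.symm, fun e => e ▸ hdR⟩
    have hdd : d * d = 1 :=
      mul_eq_one_iff_eq_inv.2 ((hRH' _ (H.inv_mem hdH)).1 (hR.inv_mem d hdR)).symm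
    have hcd : c * d = d * c :=
      calc c * d = a := by rw [hd₁, ← mul_assoc, hcc, one_mul]
        _ = d * c := by rw [← hd₂, ← mul_assoc, hdd, one_mul]
    exact h.false_of_index_two_of_inter_eq_singleton hR hH h3 hc hcc hRc hdH hRH' hdd hcd
  · push Not at hD
    obtain ⟨x, hx, hx1, -⟩ := H.exists_mem_ne_ne h3 1 1
    obtain ⟨y, hy, hy1, hyx⟩ := H.exists_mem_ne_ne h3 1 x
    refine h.false_of_index_two hR hH hc hcc hRc (fun z hz => ?_) hx hy hx1 hy1 hyx.symm
      (fun w hw _ _ => ?_)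
    · exact iff_of_false (hD _ (by simp [Subgroup.mul_mem_iff_of_index_two hH, hc, hz]))
        (hD z hz)
    · exact iff_of_false (hD _ (H.mul_mem hx (H.inv_mem hw))) (hD _ (H.mul_mem hy (H.inv_mem hw)))

end IndexTwo

namespace IsCayleyGRR
variable {G : Type*} [Group G] [Finite G] {R : Set G} {H : Subgroup G}

/-- `|R| ≤ |Rᶜ| + 1 ≤ |H| + 1` gives `|G| ≤ 2 |H| + 2`; index at least three would leave
`|G| ≤ 6`. -/
lemma index_eq_two (h : IsCayleyGRR G R) (hR : IsCayleySubset R) (hn : 2 < Nat.card G)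
    (hHtop : H ≠ ⊤) {a c : G} (ha : a ∈ cayIso G R) (hSH : Rcompl G R ⊆ insert c H) :
    H.index = 2 ∧ 2 < Nat.card H := by
  have hS : (Rcompl G R).ncard ≤ Nat.card H := by
    have hsub : Rcompl G R ⊆ insert c ((H : Set G) \ {1}) := fun s hs => by
      rcases hSH hs with rfl | hsH
      · exact Set.mem_insert _ _
      · exact Set.mem_insert_of_mem _ ⟨hsH, hR.rcompl.ne_one hs⟩
    calc (Rcompl G R).ncard ≤ (insert c ((H : Set G) \ {1})).ncard := Set.ncard_le_ncard hsub
      _ ≤ ((H : Set G) \ {1}).ncard + 1 := Set.ncard_insert_le _ _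
      _ = Nat.card H := by
        rw [Set.ncard_sdiff_singleton_add_one H.one_mem]
        exact (Nat.card_coe_set_eq _).symm
  have hRS : R.ncard ≤ (Rcompl G R).ncard + 1 := by
    rw [← hR.ncard_compl, ← hR.ncard_neighborSet_cay a]
    exact Set.ncard_le_ncard (neighborSet_subset_compl_of_mem_cayIso ha)
  have hsum := hR.ncard_add_ncard_rcompl
  have hidx := H.card_mul_index
  have hidx1 := Subgroup.one_lt_index_of_ne_top hHtop
  have h4 := h.four_lt_card hR hn
  have h6 := h.card_ne_six hR
  by_cases hidx2 : H.index = 2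
  · rw [hidx2] at hidx
    omega
  have h3 : Nat.card H * 3 ≤ Nat.card G := hidx ▸ Nat.mul_le_mul_left _ (by omega)
  have hpos : 0 < Nat.card H := Nat.card_pos
  obtain hH1 | hH2 : Nat.card H = 1 ∨ Nat.card H = 2 := by omega
  · omega
  · rw [hH2] at hidx
    omega

lemma closure_rcompl_diff_cayIso_eq_top_or (h : IsCayleyGRR G R) (hR : IsCayleySubset R)
    (hn : 2 < Nat.card G) (hB : (cayIso G (Rcompl G R)).ncard ≤ 1) :
    Subgroup.closure (Rcompl G R \ cayIso G (Rcompl G R)) = ⊤ ∨ cayIso G R = ∅ := by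
  by_contra! ⟨hH, a, ha⟩
  have htop := (h.rcompl hR).closure_eq_top hR.rcompl hn
  obtain ⟨c, hBc⟩ : ∃ c, cayIso G (Rcompl G R) = {c} := by
    rcases (Set.ncard_le_one_iff_eq (Set.toFinite _)).1 hB with hB | hB
    · exact (hH (by rwa [hB, Set.sdiff_empty])).elim
    · exact hB
  have hcB : c ∈ cayIso G (Rcompl G R) := hBc ▸ rfl
  have hcinv : c⁻¹ = c := by simpa [hBc] using hR.rcompl.inv_mem_cayIso hcB
  rw [hBc] at hH
  have hSH : Rcompl G R ⊆ insert c (Subgroup.closure (Rcompl G R \ {c})) := fun s hs => by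
    by_cases hsc : s = c
    · exact Or.inl hsc
    · exact Or.inr (Subgroup.subset_closure ⟨hs, hsc⟩)
  have hcH : c ∉ Subgroup.closure (Rcompl G R \ {c}) := fun hcH => hH (top_unique (htop ▸
    (Subgroup.closure_le _).2 (hSH.trans (Set.insert_subset hcH subset_rfl))))
  obtain ⟨hidx, h3⟩ := h.index_eq_two hR hn hH ha hSH
  refine h.false_of_index_two_of_mem_cayIso hR hidx h3 hcH
    (mul_eq_one_iff_eq_inv.2 hcinv.symm) (fun v hv => ⟨?_, fun hvc => ?_⟩) ha
  · rintro hvR rfl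
    exact (mem_Rcompl.1 hcB.1).2 hvR
  · by_contra hvR
    rcases hSH (mem_Rcompl.2 ⟨fun hv1 => hv (by rw [hv1]; exact Subgroup.one_mem _), hvR⟩) with
      hv' | hv'
    exacts [hvc hv', hv hv']

end IsCayleyGRR

/-- if `Cay(G,R)` is a GRR then `|Γ[R]_I| ≤ 1` or `|Γᶜ[Rᶜ]_I| ≤ 1`;
moreover, when `|G| > 2`, either `G = ⟨R ∖ Γ[R]_I⟩` and `|Γ[R]_I| ≤ 1`, or
`G = ⟨Rᶜ ∖ Γᶜ[Rᶜ]_I⟩` and `|Γᶜ[Rᶜ]_I| ≤ 1`. -/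
theorem statement_2 (G : Type*) [Group G] [Finite G] (R : Set G)
    (h1 : (1 : G) ∉ R) (hinv : ∀ r ∈ R, r⁻¹ ∈ R)
    (hGRR : IsCayleyGRR G R) :
    ((cayIso G R).ncard ≤ 1 ∨ (cayIso G (Rcompl G R)).ncard ≤ 1) ∧
    (2 < Nat.card G →
      (Subgroup.closure (R \ cayIso G R) = ⊤ ∧ (cayIso G R).ncard ≤ 1) ∨
      (Subgroup.closure (Rcompl G R \ cayIso G (Rcompl G R)) = ⊤ ∧
        (cayIso G (Rcompl G R)).ncard ≤ 1)) := by
  have hR : IsCayleySubset R := ⟨h1, hinv⟩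
  have hSS := hR.rcompl_rcompl
  refine ⟨hGRR.ncard_cayIso_le_one_or hR, fun hn => ?_⟩
  rcases hGRR.ncard_cayIso_le_one_or hR with hA | hB
  · rcases (hGRR.rcompl hR).closure_rcompl_diff_cayIso_eq_top_or hR.rcompl hn (by rwa [hSS])
      with h | h
    · exact Or.inl ⟨by rwa [hSS] at h, hA⟩
    · exact Or.inr ⟨by simp [h, (hGRR.rcompl hR).closure_eq_top hR.rcompl hn], by simp [h]⟩
  · rcases hGRR.closure_rcompl_diff_cayIso_eq_top_or hR hn hB with h | h
    · exact Or.inr ⟨h, hB⟩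
    · exact Or.inl ⟨by simp [h, hGRR.closure_eq_top hR hn], by simp [h]⟩
end

section
/- Let Γ := Cos(G,H,A) be a vertex-transitive coset graph of a finite group G, and let B be a subset of A. If every automorphism φ ∈ Aut(Γ) fixing the vertex H fixes the set {Hx : x ∈ B} setwise, then every such φ fixes the set {Hx : x ∈ ⟨B⟩} setwise. -/
/-- The right coset `Hx` as a subset of `G`. -/
def rightCoset' (G : Type*) [Group G] (H : Subgroup G) (x : G) : Set G :=
  {g : G | g * x⁻¹ ∈ H}

/-- The vertex set of the coset graph: the right cosets of `H` in `G`. -/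
def CosetVerts (G : Type*) [Group G] (H : Subgroup G) : Type _ :=
  {S : Set G // ∃ x : G, S = rightCoset' G H x}

/-- The vertex `Hx` of the coset graph. -/
def cosetVert (G : Type*) [Group G] (H : Subgroup G) (x : G) : CosetVerts G H :=
  ⟨rightCoset' G H x, x, rfl⟩

/-- The coset graph `Cos(G,H,A)`: `Hx` is adjacent to `Hy` iff `H(yx⁻¹)H ⊆ A`. -/
def CosetGraph (G : Type*) [Group G] (H : Subgroup G) (A : Set G) :
    SimpleGraph (CosetVerts G H) :=
  SimpleGraph.fromRel (fun X Y => ∃ x y : G, X = cosetVert G H x ∧ Y = cosetVert G H y ∧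
    ∀ h k : G, h ∈ H → k ∈ H → h * (y * x⁻¹) * k ∈ A)

namespace Statement4Aux

variable {G : Type*} [Group G] {H : Subgroup G}

lemma rightCoset'_mul (x g : G) :
    (· * g) '' rightCoset' G H x = rightCoset' G H (x * g) := by
  ext t
  simp only [Set.mem_image, rightCoset', Set.mem_setOf_eq]
  constructor
  · rintro ⟨s, hs, rfl⟩
    have : s * g * (x * g)⁻¹ = s * x⁻¹ := by group
    rwa [this]
  · intro ht
    refine ⟨t * g⁻¹, ?_, by group⟩
    have : t * g⁻¹ * x⁻¹ = t * (x * g)⁻¹ := by group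
    rwa [this]

/-- Right multiplication by `g` on the coset space. -/
def rhoFun (H : Subgroup G) (g : G) (v : CosetVerts G H) : CosetVerts G H :=
  ⟨(· * g) '' v.1, v.2.elim fun x hx => ⟨x * g, by rw [hx]; exact rightCoset'_mul x g⟩⟩

lemma rhoFun_rhoFun (g g' : G) (v : CosetVerts G H) :
    rhoFun H g' (rhoFun H g v) = rhoFun H (g * g') v := by
  apply Subtype.ext
  show (· * g') '' ((· * g) '' v.1) = (· * (g * g')) '' v.1
  rw [← Set.image_comp]
  apply congrFun
  apply congrArg
  funext s
  simp [Function.comp, mul_assoc]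

lemma rhoFun_one (v : CosetVerts G H) : rhoFun H 1 v = v := by
  apply Subtype.ext
  show (· * 1) '' v.1 = v.1
  simp

/-- Right multiplication by `g` as a permutation of the coset space. -/
def rho (H : Subgroup G) (g : G) : Equiv.Perm (CosetVerts G H) where
  toFun := rhoFun H g
  invFun := rhoFun H g⁻¹
  left_inv v := by rw [rhoFun_rhoFun, mul_inv_cancel, rhoFun_one]
  right_inv v := by rw [rhoFun_rhoFun, inv_mul_cancel, rhoFun_one]

lemma rho_cosetVert (g x : G) : rho H g (cosetVert G H x) = cosetVert G H (x * g) :=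
  Subtype.ext (rightCoset'_mul x g)

lemma rho_rho (g g' : G) (v : CosetVerts G H) :
    rho H g' (rho H g v) = rho H (g * g') v := rhoFun_rhoFun g g' v

lemma rho_one (v : CosetVerts G H) : rho H 1 v = v := rhoFun_one v

variable {A : Set G}

lemma rel_rho (g : G) (u v : CosetVerts G H)
    (h : ∃ x y : G, u = cosetVert G H x ∧ v = cosetVert G H y ∧
      ∀ h k : G, h ∈ H → k ∈ H → h * (y * x⁻¹) * k ∈ A) :
    ∃ x y : G, rho H g u = cosetVert G H x ∧ rho H g v = cosetVert G H y ∧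
      ∀ h k : G, h ∈ H → k ∈ H → h * (y * x⁻¹) * k ∈ A := by
  obtain ⟨x, y, rfl, rfl, hA⟩ := h
  refine ⟨x * g, y * g, rho_cosetVert g x, rho_cosetVert g y, fun h k hh hk => ?_⟩
  have : h * (y * g * (x * g)⁻¹) * k = h * (y * x⁻¹) * k := by group
  rw [this]; exact hA h k hh hk

lemma isAut_rho (g : G) : IsGraphAut (CosetGraph G H A) (rho H g) := by
  intro u v
  have hcan : ∀ w : CosetVerts G H, rho H g⁻¹ (rho H g w) = w := fun w => by
    rw [rho_rho, mul_inv_cancel, rho_one]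
  simp only [CosetGraph, SimpleGraph.fromRel_adj]
  constructor
  · rintro ⟨hne, h⟩
    refine ⟨fun h' => hne (by rw [h']), ?_⟩
    rcases h with h | h
    · left
      have := rel_rho g⁻¹ _ _ h
      rwa [hcan, hcan] at this
    · right
      have := rel_rho g⁻¹ _ _ h
      rwa [hcan, hcan] at this
  · rintro ⟨hne, h⟩
    refine ⟨fun h' => hne ((rho H g).injective h'), ?_⟩
    rcases h with h | h
    · exact Or.inl (rel_rho g _ _ h)
    · exact Or.inr (rel_rho g _ _ h)

lemma isAut_symm {V : Type*} {Γ : SimpleGraph V} {σ : Equiv.Perm V}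
    (h : IsGraphAut Γ σ) : IsGraphAut Γ σ.symm := fun u v => by
  have := (h (σ.symm u) (σ.symm v)).symm
  simpa using this

lemma isAut_trans {V : Type*} {Γ : SimpleGraph V} {σ τ : Equiv.Perm V}
    (hσ : IsGraphAut Γ σ) (hτ : IsGraphAut Γ τ) : IsGraphAut Γ (σ.trans τ) := fun u v => by
  simpa [Equiv.trans_apply] using (hτ (σ u) (σ v)).trans (hσ u v)

end Statement4Aux
namespace Statement4Aux

lemma inv_mem_monClosure {G : Type*} [Group G] [Finite G] {B : Set G} {y : G}
    (hy : y ∈ Submonoid.closure B) : y⁻¹ ∈ Submonoid.closure B := by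
  have hpos : 0 < orderOf y := orderOf_pos y
  have h1 : y ^ (orderOf y - 1) * y = 1 := by
    rw [← pow_succ, Nat.sub_add_cancel hpos, pow_orderOf_eq_one]
  have h2 : y ^ (orderOf y - 1) = y⁻¹ := eq_inv_of_mul_eq_one_left h1
  rw [← h2]
  exact Submonoid.pow_mem _ hy _

lemma mem_closure_iff_mon {G : Type*} [Group G] [Finite G] {B : Set G} {x : G} :
    x ∈ Subgroup.closure B ↔ x ∈ Submonoid.closure B := by
  let K : Subgroup G :=
    { Submonoid.closure B with inv_mem' := fun hy => inv_mem_monClosure hy }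
  constructor
  · intro hx
    exact (Subgroup.closure_le K).mpr Submonoid.subset_closure hx
  · intro hx
    exact Submonoid.closure_le.mpr (Subgroup.subset_closure (G := G) (k := B)) hx

lemma key {G : Type*} [Group G] [Finite G] {H : Subgroup G} {A : Set G} {B : Set G}
    (hfix : ∀ σ : Equiv.Perm (CosetVerts G H), IsGraphAut (CosetGraph G H A) σ →
      σ (cosetVert G H 1) = cosetVert G H 1 →
      ⇑σ '' {v | ∃ b ∈ B, v = cosetVert G H b} = {v | ∃ b ∈ B, v = cosetVert G H b}) :
    ∀ x ∈ Submonoid.closure B, ∀ σ : Equiv.Perm (CosetVerts G H),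
      IsGraphAut (CosetGraph G H A) σ → σ (cosetVert G H 1) = cosetVert G H 1 →
      ∃ y ∈ Submonoid.closure B, σ (cosetVert G H x) = cosetVert G H y := by
  intro x hx
  induction hx using Submonoid.closure_induction with
  | mem b hb =>
    intro σ hσ hσ1
    have hmem : σ (cosetVert G H b) ∈ {v | ∃ b ∈ B, v = cosetVert G H b} := by
      rw [← hfix σ hσ hσ1]
      exact ⟨cosetVert G H b, ⟨b, hb, rfl⟩, rfl⟩
    obtain ⟨b', hb', heq⟩ := hmem
    exact ⟨b', Submonoid.subset_closure hb', heq⟩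
  | one =>
    intro σ hσ hσ1
    exact ⟨1, one_mem _, hσ1⟩
  | mul u v hu hv pu pv =>
    intro σ hσ hσ1
    obtain ⟨v', hv', hσv⟩ := pv σ hσ hσ1
    set τ : Equiv.Perm (CosetVerts G H) := (rho H v).trans (σ.trans (rho H v'⁻¹)) with hτdef
    have hτaut : IsGraphAut (CosetGraph G H A) τ :=
      isAut_trans (isAut_rho v) (isAut_trans hσ (isAut_rho v'⁻¹))
    have hτapp : ∀ w : G, τ (cosetVert G H w) = rho H v'⁻¹ (σ (cosetVert G H (w * v))) := by
      intro w
      simp only [hτdef, Equiv.trans_apply, rho_cosetVert]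
    have hτ1 : τ (cosetVert G H 1) = cosetVert G H 1 := by
      rw [hτapp, one_mul, hσv, rho_cosetVert, mul_inv_cancel]
    obtain ⟨u', hu', hτu⟩ := pu τ hτaut hτ1
    refine ⟨u' * v', mul_mem hu' hv', ?_⟩
    rw [hτapp] at hτu
    have := congrArg (rho H v') hτu
    rwa [rho_rho, inv_mul_cancel, rho_one, rho_cosetVert] at this

end Statement4Aux

/-- if every automorphism of `Cos(G,H,A)` fixing the vertex `H` fixes
`{Hx : x ∈ B}` setwise, then every such automorphism fixes `{Hx : x ∈ ⟨B⟩}` setwise. -/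
theorem statement_4 (G : Type*) [Group G] [Finite G] (H : Subgroup G) (A : Set G)
    (hAinv : ∀ a ∈ A, a⁻¹ ∈ A)
    (hHAH : ∀ h ∈ H, ∀ a ∈ A, ∀ k ∈ H, h * a * k ∈ A)
    (B : Set G) (hBA : B ⊆ A)
    (hfix : ∀ σ : Equiv.Perm (CosetVerts G H), IsGraphAut (CosetGraph G H A) σ →
      σ (cosetVert G H 1) = cosetVert G H 1 →
      ⇑σ '' {v | ∃ b ∈ B, v = cosetVert G H b} = {v | ∃ b ∈ B, v = cosetVert G H b}) :
    ∀ σ : Equiv.Perm (CosetVerts G H), IsGraphAut (CosetGraph G H A) σ →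
      σ (cosetVert G H 1) = cosetVert G H 1 →
      ⇑σ '' {v | ∃ b ∈ Subgroup.closure B, v = cosetVert G H b} =
        {v | ∃ b ∈ Subgroup.closure B, v = cosetVert G H b} := by
  intro σ hσ hσ1
  apply Set.eq_of_subset_of_subset
  · rintro v ⟨w, ⟨b, hb, rfl⟩, rfl⟩
    obtain ⟨y, hy, heq⟩ := Statement4Aux.key hfix b
      (Statement4Aux.mem_closure_iff_mon.mp hb) σ hσ hσ1
    exact ⟨y, Statement4Aux.mem_closure_iff_mon.mpr hy, heq⟩
  · rintro v ⟨b, hb, rfl⟩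
    have hσ'aut : IsGraphAut (CosetGraph G H A) σ.symm := Statement4Aux.isAut_symm hσ
    have hσ'1 : σ.symm (cosetVert G H 1) = cosetVert G H 1 := by
      conv_lhs => rw [← hσ1]
      exact σ.symm_apply_apply _
    obtain ⟨y, hy, heq⟩ := Statement4Aux.key hfix b
      (Statement4Aux.mem_closure_iff_mon.mp hb) σ.symm hσ'aut hσ'1
    refine ⟨cosetVert G H y, ⟨y, Statement4Aux.mem_closure_iff_mon.mpr hy, rfl⟩, ?_⟩
    rw [← heq, σ.apply_symm_apply]
end

section
/- Let Γ := Cos(G,H,A) be a vertex-transitive coset graph of a finite group G, and let B be a subset of A. If every automorphism φ ∈ Aut(Γ) fixing the vertex H fixes the set {Hx : x ∈ B} pointwise, then every such φ fixes the set {Hx : x ∈ ⟨B⟩} pointwise. -/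
section CosetGraph

variable {G : Type*} [Group G] (H : Subgroup G)

lemma image_mulRight_rightCoset' (g x : G) :
    Equiv.mulRight g '' rightCoset' G H x = rightCoset' G H (x * g) := by
  ext s
  simp [rightCoset', mul_assoc]

lemma exists_cosetVert_eq (u : CosetVerts G H) : ∃ x, cosetVert G H x = u :=
  let ⟨x, hx⟩ := u.2
  ⟨x, Subtype.ext hx.symm⟩

def rightMulPerm (g : G) : Equiv.Perm (CosetVerts G H) :=
  (Equiv.Set.congr (Equiv.mulRight g)).subtypeEquiv fun S => by
    constructor
    · rintro ⟨x, rfl⟩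
      exact ⟨x * g, image_mulRight_rightCoset' H g x⟩
    · rintro ⟨y, hy⟩
      refine ⟨y * g⁻¹, ?_⟩
      rw [← (Equiv.Set.congr (Equiv.mulRight g)).symm_apply_apply S, hy]
      simpa [Equiv.image_symm_eq_preimage] using image_mulRight_rightCoset' H g⁻¹ y

lemma rightMulPerm_cosetVert (g x : G) :
    rightMulPerm H g (cosetVert G H x) = cosetVert G H (x * g) :=
  Subtype.ext (image_mulRight_rightCoset' H g x)

lemma rightMulPerm_inv_apply_rightMulPerm (g : G) (u : CosetVerts G H) :
    rightMulPerm H g⁻¹ (rightMulPerm H g u) = u := by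
  obtain ⟨x, rfl⟩ := exists_cosetVert_eq H u
  simp [rightMulPerm_cosetVert]

variable (A : Set G)

lemma CosetGraph.adj_rightMulPerm_of_adj (g : G) {u v : CosetVerts G H}
    (huv : (CosetGraph G H A).Adj u v) :
    (CosetGraph G H A).Adj (rightMulPerm H g u) (rightMulPerm H g v) := by
  obtain ⟨hne, hrel⟩ := huv
  refine ⟨(rightMulPerm H g).injective.ne hne, ?_⟩
  rcases hrel with ⟨x, y, rfl, rfl, hA⟩ | ⟨y, x, rfl, rfl, hA⟩
  · refine Or.inl ⟨x * g, y * g, rightMulPerm_cosetVert H g x, rightMulPerm_cosetVert H g y, ?_⟩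
    simpa [mul_assoc] using hA
  · refine Or.inr ⟨y * g, x * g, rightMulPerm_cosetVert H g y, rightMulPerm_cosetVert H g x, ?_⟩
    simpa [mul_assoc] using hA

lemma isGraphAut_rightMulPerm (g : G) : IsGraphAut (CosetGraph G H A) (rightMulPerm H g) := by
  intro u v
  refine ⟨fun h => ?_, CosetGraph.adj_rightMulPerm_of_adj H A g⟩
  simpa only [rightMulPerm_inv_apply_rightMulPerm] using
    CosetGraph.adj_rightMulPerm_of_adj H A g⁻¹ h

end CosetGraph

lemma IsGraphAut.trans {V : Type*} {Γ : SimpleGraph V} {σ τ : Equiv.Perm V}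
    (hσ : IsGraphAut Γ σ) (hτ : IsGraphAut Γ τ) : IsGraphAut Γ (σ.trans τ) :=
  fun u v => (hτ (σ u) (σ v)).trans (hσ u v)

def stabilizerFixedSubmonoid (G : Type*) [Group G] (H : Subgroup G) (A : Set G) :
    Submonoid G where
  carrier := {x | ∀ σ : Equiv.Perm (CosetVerts G H), IsGraphAut (CosetGraph G H A) σ →
    σ (cosetVert G H 1) = cosetVert G H 1 → σ (cosetVert G H x) = cosetVert G H x}
  one_mem' := fun _ _ h1 => h1
  mul_mem' := by
    intro x y hx hy σ hσ h1
    set τ := (rightMulPerm H y).trans (σ.trans (rightMulPerm H y⁻¹))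
    have hτ : IsGraphAut (CosetGraph G H A) τ :=
      (isGraphAut_rightMulPerm H A y).trans (hσ.trans (isGraphAut_rightMulPerm H A y⁻¹))
    have hτ1 : τ (cosetVert G H 1) = cosetVert G H 1 := by
      simp [τ, rightMulPerm_cosetVert, hy σ hσ h1]
    have hτx := hx τ hτ hτ1
    apply (rightMulPerm H y⁻¹).injective
    simpa [τ, rightMulPerm_cosetVert] using hτx

theorem statement_5_general (G : Type*) [Group G] [Finite G] (H : Subgroup G) (A : Set G)
    (B : Set G)
    (hfix : ∀ σ : Equiv.Perm (CosetVerts G H), IsGraphAut (CosetGraph G H A) σ →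
      σ (cosetVert G H 1) = cosetVert G H 1 →
      ∀ b ∈ B, σ (cosetVert G H b) = cosetVert G H b) :
    ∀ σ : Equiv.Perm (CosetVerts G H), IsGraphAut (CosetGraph G H A) σ →
      σ (cosetVert G H 1) = cosetVert G H 1 →
      ∀ x ∈ Subgroup.closure B, σ (cosetVert G H x) = cosetVert G H x := by
  intro σ hσ h1 x hx
  have hB : B ⊆ stabilizerFixedSubmonoid G H A := fun b hb τ hτ hτ1 => hfix τ hτ hτ1 b hb
  have hx' : x ∈ Submonoid.closure B := by
    rwa [← Subgroup.closure_toSubmonoid_of_finite, Subgroup.mem_toSubmonoid]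
  exact Submonoid.closure_le.mpr hB hx' σ hσ h1

/-- if every automorphism of `Cos(G,H,A)` fixing the vertex `H` fixes
`{Hx : x ∈ B}` pointwise, then every such automorphism fixes `{Hx : x ∈ ⟨B⟩}` pointwise. -/
theorem statement_5 (G : Type*) [Group G] [Finite G] (H : Subgroup G) (A : Set G)
    (hAinv : ∀ a ∈ A, a⁻¹ ∈ A)
    (hHAH : ∀ h ∈ H, ∀ a ∈ A, ∀ k ∈ H, h * a * k ∈ A)
    (B : Set G) (hBA : B ⊆ A)
    (hfix : ∀ σ : Equiv.Perm (CosetVerts G H), IsGraphAut (CosetGraph G H A) σ →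
      σ (cosetVert G H 1) = cosetVert G H 1 →
      ∀ b ∈ B, σ (cosetVert G H b) = cosetVert G H b) :
    ∀ σ : Equiv.Perm (CosetVerts G H), IsGraphAut (CosetGraph G H A) σ →
      σ (cosetVert G H 1) = cosetVert G H 1 →
      ∀ x ∈ Subgroup.closure B, σ (cosetVert G H x) = cosetVert G H x :=
  statement_5_general G H A B hfix
end

section
/- Let G, R, m and x be as in the hypotheses of the Θ-construction (so G is non-abelian, Cay(G,R) is a GRR with at most one isolated vertex in the induced subgraph on R whose non-isolated part generates G, and x satisfies one of conditions (1),(2),(3)). Then for every i ∈ {0,…,m−1} and every automorphism φ of Θᵐ(G,R,x), the image of the block G_i := G×{i} under φ is again one of the blocks G_0,…,G_{m−1}. -/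
/-- The graph `Θᵐ(G,R,x)` in cases (1) and (3): vertex set `G × {0,…,m−1}`, with edges
`{g_i,(rg)_i}` for `r ∈ R`, `{g_i, g_{i+1}}`, and `{g_0,(xg)_{m−1}}`. -/
def ThetaA (G : Type*) [Group G] (m : ℕ) (R : Set G) (x : G) :
    SimpleGraph (G × Fin m) :=
  SimpleGraph.fromRel (fun p q =>
    (p.2 = q.2 ∧ q.1 * p.1⁻¹ ∈ R) ∨
    (q.2.val = p.2.val + 1 ∧ q.1 = p.1) ∨
    (p.2.val = 0 ∧ q.2.val = m - 1 ∧ q.1 = x * p.1))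

/-- The graph `Θ²(G,R,x)` in case (2): vertex set `G × {0,1}`, with edges
`{g_0,(rg)_0}`, `{g_0,(rg)_1}` for `r ∈ R`, and `{g_0,(xg)_1}`. -/
def ThetaB (G : Type*) [Group G] (R : Set G) (x : G) : SimpleGraph (G × Fin 2) :=
  SimpleGraph.fromRel (fun p q =>
    p.2.val = 0 ∧ ((q.2.val = 0 ∧ q.1 * p.1⁻¹ ∈ R) ∨ (q.2.val = 1 ∧ q.1 * p.1⁻¹ ∈ R) ∨
      (q.2.val = 1 ∧ q.1 = x * p.1)))

/-!
For `ThetaA` the blocks are the classes of the equivalence relation generated by "lies on a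
triangle". Within a block, the edge `g — r g` lies on a triangle whenever `r` is not isolated in
`Cay(G,R)[R]`, and these `r` generate `G`. An edge between two blocks never does: for `m ≥ 3` a
vertex has only one neighbour in each other block, for `m = 2` its two neighbours there differ by
`x^{±1} ∉ R`, and a triangle through three blocks would force `x = 1`.
For `ThetaB` the blocks are separated by degrees: a vertex of `G × {1}` has at most `|R ∪ {x}|`
neighbours, a vertex of `G × {0}` has those many in `G × {1}` and at least one more in `G × {0}`.
-/

namespace SimpleGraph

variable {V W : Type*} {Γ : SimpleGraph V} {Δ : SimpleGraph W} {u v : V}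

def TriangleAdj (Γ : SimpleGraph V) (u v : V) : Prop :=
  Γ.Adj u v ∧ ∃ w, Γ.Adj u w ∧ Γ.Adj v w

lemma TriangleAdj.map (f : Γ →g Δ) (h : Γ.TriangleAdj u v) : Δ.TriangleAdj (f u) (f v) :=
  let ⟨huv, w, huw, hvw⟩ := h
  ⟨f.map_adj huv, f w, f.map_adj huw, f.map_adj hvw⟩

lemma eqvGen_triangleAdj_map (f : Γ →g Δ) (h : Relation.EqvGen Γ.TriangleAdj u v) :
    Relation.EqvGen Δ.TriangleAdj (f u) (f v) := by
  induction h with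
  | rel a b hab => exact .rel _ _ (hab.map f)
  | refl a => exact .refl _
  | symm a b _ ih => exact ih.symm
  | trans a b c _ _ ihab ihbc => exact ihab.trans _ _ _ ihbc

lemma Iso.eqvGen_triangleAdj_iff (f : Γ ≃g Δ) :
    Relation.EqvGen Δ.TriangleAdj (f u) (f v) ↔ Relation.EqvGen Γ.TriangleAdj u v :=
  ⟨fun h => by simpa using eqvGen_triangleAdj_map f.symm.toHom h, eqvGen_triangleAdj_map f.toHom⟩

lemma Iso.ncard_neighborSet (f : Γ ≃g Δ) (v : V) :
    (Δ.neighborSet (f v)).ncard = (Γ.neighborSet v).ncard := by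
  rw [← f.image_neighborSet, Set.ncard_image_of_injective _ f.injective]

end SimpleGraph

lemma Relation.EqvGen.apply_eq {α β : Type*} {r : α → α → Prop} {f : α → β}
    (hr : ∀ a b, r a b → f a = f b) {a b : α} (h : Relation.EqvGen r a b) : f a = f b :=
  (Equivalence.eqvGen_iff (Setoid.ker f).iseqv).1 (h.mono hr)

lemma Subgroup.eqvGen_of_closure_eq_top {G : Type*} [Group G] {S : Set G} {r : G → G → Prop}
    (hS : Subgroup.closure S = ⊤) (hr : ∀ s ∈ S, ∀ g, r g (s * g)) (g h : G) :
    Relation.EqvGen r g h := by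
  suffices ∀ k ∈ Subgroup.closure S, ∀ g, Relation.EqvGen r g (k * g) by
    simpa using this (h * g⁻¹) (hS ▸ Subgroup.mem_top _) g
  intro k hk
  induction hk using Subgroup.closure_induction with
  | mem s hs => exact fun g => .rel _ _ (hr s hs g)
  | one => exact fun g => by simpa using .refl g
  | mul a b _ _ iha ihb =>
    exact fun g => (ihb g).trans _ _ _ (by simpa [mul_assoc] using iha (b * g))
  | inv a _ iha => exact fun g => by simpa using (iha (a⁻¹ * g)).symm

lemma Equiv.Perm.exists_image_setOf_snd_eq {α ι : Type*} [Nonempty α] (σ : Equiv.Perm (α × ι))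
    (hσ : ∀ u v, (σ u).2 = (σ v).2 ↔ u.2 = v.2) (i : ι) :
    ∃ j, σ '' {p | p.2 = i} = {p | p.2 = j} := by
  let a : α := Classical.arbitrary α
  refine ⟨(σ (a, i)).2, Set.ext fun u => ?_⟩
  rw [σ.image_eq_preimage_symm]
  show (σ.symm u).2 = (a, i).2 ↔ u.2 = (σ (a, i)).2
  rw [← hσ, Equiv.apply_symm_apply]

def IsGraphAut.toIso {V : Type*} {Γ : SimpleGraph V} {σ : Equiv.Perm V}
    (hσ : IsGraphAut Γ σ) : Γ ≃g Γ :=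
  ⟨σ, hσ _ _⟩

namespace Cay

variable {G : Type*} [Group G] {R : Set G}

lemma adj_mul_right {a b : G} (g : G) : (Cay G R).Adj (a * g) (b * g) ↔ (Cay G R).Adj a b := by
  simp [Cay, mul_assoc]

lemma adj_one_of_mem (h1R : (1 : G) ∉ R) {r : G} (hr : r ∈ R) : (Cay G R).Adj 1 r := by
  simp only [Cay, SimpleGraph.fromRel_adj]
  exact ⟨fun h => h1R (h ▸ hr), Or.inl (by simpa using hr)⟩

lemma triangleAdj_mul (h1R : (1 : G) ∉ R) {r : G} (hr : r ∈ R \ cayIso G R) (g : G) :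
    (Cay G R).TriangleAdj g (r * g) := by
  obtain ⟨hrR, hrI⟩ := hr
  obtain ⟨u, huR, hru⟩ : ∃ u ∈ R, (Cay G R).Adj r u := by
    simpa [cayIso, hrR] using hrI
  have hadj {s : G} (hs : s ∈ R) : (Cay G R).Adj g (s * g) := by
    simpa using (adj_mul_right g).2 (adj_one_of_mem h1R hs)
  exact ⟨hadj hrR, u * g, hadj huR, (adj_mul_right g).2 hru⟩

end Cay

namespace ThetaA

variable {G : Type*} [Group G] {m : ℕ} {R : Set G} {x : G}

lemma adj_mk_mk_same (hm : 2 ≤ m) {a b : G} {i : Fin m} :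
    (ThetaA G m R x).Adj (a, i) (b, i) ↔ (Cay G R).Adj a b := by
  simp only [ThetaA, Cay, SimpleGraph.fromRel_adj, ne_eq, Prod.mk.injEq, and_true]
  have hsucc : (i : ℕ) ≠ i + 1 := by omega
  have hwrap : ¬((i : ℕ) = 0 ∧ (i : ℕ) = m - 1) := by omega
  tauto

def blockHom (hm : 2 ≤ m) (i : Fin m) : Cay G R →g ThetaA G m R x where
  toFun g := (g, i)
  map_rel' h := (adj_mk_mk_same hm).2 h

-- Every clause is solved for `b`, so that callers can substitute it with `rfl` patterns.
lemma adj_of_snd_ne {a b : G} {i j : Fin m} (h : (ThetaA G m R x).Adj (a, i) (b, j))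
    (hij : i ≠ j) :
    (b = a ∧ (j.val = i.val + 1 ∨ i.val = j.val + 1)) ∨
      (i.val = 0 ∧ j.val = m - 1 ∧ b = x * a) ∨ (j.val = 0 ∧ i.val = m - 1 ∧ b = x⁻¹ * a) := by
  simp only [ThetaA, SimpleGraph.fromRel_adj] at h
  obtain ⟨-, (⟨e, -⟩ | ⟨hj, rfl⟩ | h) | (⟨e, -⟩ | ⟨hi, rfl⟩ | h)⟩ := h
  · exact absurd e hij
  · exact Or.inl ⟨rfl, Or.inl hj⟩
  · exact Or.inr (Or.inl h)
  · exact absurd e.symm hij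
  · exact Or.inl ⟨rfl, Or.inr hi⟩
  · exact Or.inr (Or.inr ⟨h.1, h.2.1, by rw [h.2.2, inv_mul_cancel_left]⟩)

lemma not_adj_of_adj_of_adj (hRinv : ∀ r ∈ R, r⁻¹ ∈ R) (hcase : 3 ≤ m ∨ m = 2 ∧ x ∉ R)
    {a b c : G} {i j : Fin m} (hba : (ThetaA G m R x).Adj (b, j) (a, i))
    (hbc : (ThetaA G m R x).Adj (b, j) (c, i)) (hij : i ≠ j) :
    ¬ (ThetaA G m R x).Adj (a, i) (c, i) := by
  rw [adj_mk_mk_same (by omega)]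
  have ha := adj_of_snd_ne hba hij.symm
  have hc := adj_of_snd_ne hbc hij.symm
  clear hba hbc
  rcases hcase with hm3 | ⟨hm2, hxR⟩
  · rcases ha with ⟨rfl, _⟩ | ⟨_, _, rfl⟩ | ⟨_, _, rfl⟩ <;>
      rcases hc with ⟨rfl, _⟩ | ⟨_, _, rfl⟩ | ⟨_, _, rfl⟩ <;>
      first | omega | exact SimpleGraph.irrefl _
  · have hxR' : x⁻¹ ∉ R := fun h => hxR (by simpa using hRinv _ h)
    rcases ha with ⟨rfl, _⟩ | ⟨_, _, rfl⟩ | ⟨_, _, rfl⟩ <;>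
      rcases hc with ⟨rfl, _⟩ | ⟨_, _, rfl⟩ | ⟨_, _, rfl⟩ <;>
      first | omega | exact SimpleGraph.irrefl _ | simp [Cay, mul_assoc, hxR, hxR']

lemma eq_one_of_adj_of_snd_pairwise_ne {a b c : G} {i j k : Fin m}
    (hab : (ThetaA G m R x).Adj (a, i) (b, j)) (hac : (ThetaA G m R x).Adj (a, i) (c, k))
    (hbc : (ThetaA G m R x).Adj (b, j) (c, k)) (hij : i ≠ j) (hik : i ≠ k) (hjk : j ≠ k) :
    x = 1 := by
  rcases adj_of_snd_ne hab hij with ⟨rfl, _⟩ | ⟨_, _, rfl⟩ | ⟨_, _, rfl⟩ <;>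
    rcases adj_of_snd_ne hac hik with ⟨rfl, _⟩ | ⟨_, _, rfl⟩ | ⟨_, _, rfl⟩ <;>
    rcases adj_of_snd_ne hbc hjk with ⟨h', _⟩ | ⟨_, _, h'⟩ | ⟨_, _, h'⟩ <;>
    first | omega | simpa using h'

lemma snd_eq_of_triangleAdj (hRinv : ∀ r ∈ R, r⁻¹ ∈ R)
    (hcase : 3 ≤ m ∧ x ≠ 1 ∨ m = 2 ∧ x ∉ R) {u v : G × Fin m}
    (h : (ThetaA G m R x).TriangleAdj u v) : u.2 = v.2 := by
  obtain ⟨a, i⟩ := u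
  obtain ⟨b, j⟩ := v
  obtain ⟨hab, ⟨c, k⟩, hac, hbc⟩ := h
  show i = j
  by_contra hij
  have hcase' : 3 ≤ m ∨ m = 2 ∧ x ∉ R := hcase.imp_left And.left
  by_cases hki : k = i
  · subst hki
    exact not_adj_of_adj_of_adj hRinv hcase' hab.symm hbc hij hac
  by_cases hkj : k = j
  · subst hkj
    exact not_adj_of_adj_of_adj hRinv hcase' hab hac (Ne.symm hij) hbc
  rcases hcase with ⟨-, hx⟩ | ⟨hm2, -⟩
  · exact hx (eq_one_of_adj_of_snd_pairwise_ne hab hac hbc hij (Ne.symm hki) (Ne.symm hkj))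
  · omega

lemma snd_eq_snd_iff_eqvGen (h1R : (1 : G) ∉ R) (hRinv : ∀ r ∈ R, r⁻¹ ∈ R)
    (hgen : Subgroup.closure (R \ cayIso G R) = ⊤) (hcase : 3 ≤ m ∧ x ≠ 1 ∨ m = 2 ∧ x ∉ R)
    (u v : G × Fin m) : u.2 = v.2 ↔ Relation.EqvGen (ThetaA G m R x).TriangleAdj u v := by
  refine ⟨fun huv => ?_,
    Relation.EqvGen.apply_eq (f := Prod.snd) fun _ _ => snd_eq_of_triangleAdj hRinv hcase⟩
  obtain ⟨g, i⟩ := u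
  obtain ⟨h, j⟩ := v
  obtain rfl : i = j := huv
  exact SimpleGraph.eqvGen_triangleAdj_map (blockHom (by omega) i)
    (Subgroup.eqvGen_of_closure_eq_top hgen (fun _ hr g => Cay.triangleAdj_mul h1R hr g) g h)

end ThetaA

namespace ThetaB

variable {G : Type*} [Group G] {R : Set G} {x : G}

lemma adj_zero_one_iff {g b : G} :
    (ThetaB G R x).Adj (g, 0) (b, 1) ↔ b * g⁻¹ ∈ insert x R := by
  simp [ThetaB, mul_inv_eq_iff_eq_mul, or_comm]

lemma adj_mul_zero (h1R : (1 : G) ∉ R) {r : G} (hr : r ∈ R) (g : G) :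
    (ThetaB G R x).Adj (g, 0) (r * g, 0) := by
  simpa [ThetaB] using ⟨fun h => h1R (h ▸ hr), Or.inl hr⟩

lemma adj_one {g b : G} {l : Fin 2} (h : (ThetaB G R x).Adj (g, 1) (b, l)) :
    l = 0 ∧ g * b⁻¹ ∈ insert x R := by
  simp only [ThetaB, SimpleGraph.fromRel_adj] at h
  simpa [mul_inv_eq_iff_eq_mul, or_comm] using h.2

lemma neighborSet_one_subset (g : G) :
    (ThetaB G R x).neighborSet (g, 1) ⊆ (fun z => (z⁻¹ * g, (0 : Fin 2))) '' insert x R := by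
  rintro ⟨b, l⟩ h
  obtain ⟨rfl, hb⟩ := adj_one h
  exact ⟨g * b⁻¹, hb, by simp⟩

lemma insert_image_subset_neighborSet_zero (h1R : (1 : G) ∉ R) {r : G} (hr : r ∈ R)
    (g : G) :
    insert (r * g, 0) ((fun y => (y * g, (1 : Fin 2))) '' insert x R) ⊆
      (ThetaB G R x).neighborSet (g, 0) := by
  rintro _ (rfl | ⟨y, hy, rfl⟩)
  · exact adj_mul_zero h1R hr g
  · exact adj_zero_one_iff.2 (by simpa using hy)

lemma ncard_neighborSet_one_lt_zero [Finite G] (h1R : (1 : G) ∉ R) (hR : R.Nonempty)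
    (g h : G) :
    ((ThetaB G R x).neighborSet (g, 1)).ncard < ((ThetaB G R x).neighborSet (h, 0)).ncard := by
  obtain ⟨r, hr⟩ := hR
  have hcard : (insert (r * h, 0) ((fun y => (y * h, (1 : Fin 2))) '' insert x R)).ncard =
      (insert x R).ncard + 1 := by
    rw [Set.ncard_insert_of_notMem (a := (r * h, 0)) (by simp) (Set.toFinite _),
      Set.ncard_image_of_injective _ fun y z e => by simpa using e]
  calc ((ThetaB G R x).neighborSet (g, 1)).ncard
      ≤ ((fun z => (z⁻¹ * g, (0 : Fin 2))) '' insert x R).ncard :=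
        Set.ncard_le_ncard (neighborSet_one_subset g) (Set.toFinite _)
    _ ≤ (insert x R).ncard := Set.ncard_image_le (Set.toFinite _)
    _ < (insert (r * h, 0) ((fun y => (y * h, (1 : Fin 2))) '' insert x R)).ncard := by
        omega
    _ ≤ ((ThetaB G R x).neighborSet (h, 0)).ncard :=
        Set.ncard_le_ncard (insert_image_subset_neighborSet_zero h1R hr h) (Set.toFinite _)

lemma snd_apply [Finite G] (h1R : (1 : G) ∉ R) (hR : R.Nonempty)
    {σ : Equiv.Perm (G × Fin 2)} (hσ : IsGraphAut (ThetaB G R x) σ) (v : G × Fin 2) :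
    (σ v).2 = v.2 := by
  have hdeg : ((ThetaB G R x).neighborSet (σ v)).ncard = ((ThetaB G R x).neighborSet v).ncard :=
    hσ.toIso.ncard_neighborSet v
  generalize σ v = w at hdeg ⊢
  obtain ⟨a, i⟩ := v
  obtain ⟨b, j⟩ := w
  have hlt := ncard_neighborSet_one_lt_zero (x := x) h1R hR
  obtain rfl | rfl : i = 0 ∨ i = 1 := by omega
  all_goals obtain rfl | rfl : j = 0 ∨ j = 1 := by omega
  · rfl
  · exact absurd hdeg (hlt b a).ne
  · exact absurd hdeg (hlt a b).ne'
  · rfl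

end ThetaB

theorem statement_6_general (G : Type*) [Group G] [Finite G]
    (m : ℕ)
    (R : Set G) (h1R : (1 : G) ∉ R) (hRinv : ∀ r ∈ R, r⁻¹ ∈ R)
    (hgen : Subgroup.closure (R \ cayIso G R) = ⊤)
    (x : G) :
    (((3 ≤ m ∧ x ∉ Subgroup.center G ∧ 2 < orderOf x) ∨
      (m = 2 ∧ (∀ g : G, g ^ 2 ∈ Subgroup.center G) ∧
        x ∉ Subgroup.center G ∧ x ∉ R ∧ 2 < orderOf x)) →
      ∀ σ : Equiv.Perm (G × Fin m), IsGraphAut (ThetaA G m R x) σ →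
        ∀ i : Fin m, ∃ j : Fin m,
          ⇑σ '' {p : G × Fin m | p.2 = i} = {p : G × Fin m | p.2 = j}) ∧
    ((m = 2 ∧ x ^ 2 ∉ Subgroup.center G) →
      ∀ σ : Equiv.Perm (G × Fin 2), IsGraphAut (ThetaB G R x) σ →
        ∀ i : Fin 2, ∃ j : Fin 2,
          ⇑σ '' {p : G × Fin 2 | p.2 = i} = {p : G × Fin 2 | p.2 = j}) := by
  constructor
  · intro hcase σ hσ
    have hcase' : 3 ≤ m ∧ x ≠ 1 ∨ m = 2 ∧ x ∉ R := by
      rcases hcase with ⟨hm, hxZ, -⟩ | ⟨hm, -, -, hxR, -⟩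
      · exact Or.inl ⟨hm, fun h => hxZ (h ▸ Subgroup.one_mem _)⟩
      · exact Or.inr ⟨hm, hxR⟩
    have hblock := ThetaA.snd_eq_snd_iff_eqvGen h1R hRinv hgen hcase'
    refine σ.exists_image_setOf_snd_eq fun u v => ?_
    rw [hblock, hblock]
    exact hσ.toIso.eqvGen_triangleAdj_iff
  · rintro ⟨-, hx2⟩ σ hσ
    have : Nontrivial G := nontrivial_of_ne (x ^ 2) 1 fun h => hx2 (h ▸ Subgroup.one_mem _)
    have hR : R.Nonempty := by
      by_contra hR
      rw [Set.not_nonempty_iff_eq_empty.1 hR, Set.empty_sdiff, Subgroup.closure_empty] at hgen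
      exact bot_ne_top hgen
    have hσ2 := ThetaB.snd_apply h1R hR hσ
    exact σ.exists_image_setOf_snd_eq fun u v => by rw [hσ2, hσ2]

/-- under the hypotheses of the Θ-construction, every automorphism of
`Θᵐ(G,R,x)` maps each block `G_i = G × {i}` onto some block `G_j`. -/
theorem statement_6 (G : Type*) [Group G] [Finite G]
    (hG : ¬ ∀ a b : G, a * b = b * a)
    (m : ℕ) (hm : 2 ≤ m)
    (R : Set G) (h1R : (1 : G) ∉ R) (hRinv : ∀ r ∈ R, r⁻¹ ∈ R)
    (hGRR : IsCayleyGRR G R)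
    (hI : (cayIso G R).ncard ≤ 1)
    (hgen : Subgroup.closure (R \ cayIso G R) = ⊤)
    (x : G) :
    (((3 ≤ m ∧ x ∉ Subgroup.center G ∧ 2 < orderOf x) ∨
      (m = 2 ∧ (∀ g : G, g ^ 2 ∈ Subgroup.center G) ∧
        x ∉ Subgroup.center G ∧ x ∉ R ∧ 2 < orderOf x)) →
      ∀ σ : Equiv.Perm (G × Fin m), IsGraphAut (ThetaA G m R x) σ →
        ∀ i : Fin m, ∃ j : Fin m,
          ⇑σ '' {p : G × Fin m | p.2 = i} = {p : G × Fin m | p.2 = j}) ∧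
    ((m = 2 ∧ x ^ 2 ∉ Subgroup.center G) →
      ∀ σ : Equiv.Perm (G × Fin 2), IsGraphAut (ThetaB G R x) σ →
        ∀ i : Fin 2, ∃ j : Fin 2,
          ⇑σ '' {p : G × Fin 2 | p.2 = i} = {p : G × Fin 2 | p.2 = j}) :=
  statement_6_general G m R h1R hRinv hgen x
end

section
/- Let G be a non-abelian finite group admitting a GRR. Then G admits a 2-GRR. -/
/-- `G` admits an `m`-graphical regular representation: a regular finite simple graph whose
full automorphism group is (the image of) `G`, acting semiregularly with exactly `m` orbits. -/
def HasMGRR (G : Type*) [Group G] (m : ℕ) : Prop :=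
  ∃ (V : Type) (_ : Fintype V) (Γ : SimpleGraph V) (ρ : G →* Equiv.Perm V),
    (∃ d : ℕ, ∀ v : V, (Γ.neighborSet v).ncard = d) ∧
    (∀ g : G, IsGraphAut Γ (ρ g)) ∧
    (∀ σ : Equiv.Perm V, IsGraphAut Γ σ → ∃ g : G, ρ g = σ) ∧
    Function.Injective ⇑ρ ∧
    (∀ (g : G) (v : V), ρ g v = v → g = 1) ∧
    (∃ reps : Fin m → V, ∀ v : V, ∃! i : Fin m, ∃ g : G, ρ g (reps i) = v)

/-!
A GRR of `G` is a Cayley graph `Cay(G, S)` whose only automorphisms are left translations.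
As `G` is non-abelian, some `p ∈ S` has a conjugate `c⁻¹ * p * c ∉ S` (otherwise right
translations would be automorphisms too). With `a = p * c`, `b = c` and `T = {1, a, b}`, join two
copies of `Cay(G, S)` by `(u, false) ~ (v, true)` iff `u⁻¹ * v ∈ T`. This graph is regular, and
a vertex of the first copy lies on strictly more triangles than one of the second, so every
automorphism preserves both copies. On each copy it is then a left translation, by `x` and `y`
say, and the edges between the copies give `x⁻¹ * y * T ⊆ T`, which forces `x = y` because
`a`, `b` and `a * b` differ from `1`.
-/

open Function

theorem Set.ncard_preimage_equiv {α β : Type*} (e : α ≃ β) (s : Set β) :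
    (e ⁻¹' s).ncard = s.ncard :=
  Set.ncard_preimage_of_injective_subset_range e.injective (by simp)

section GraphAut

variable {V : Type*} {Γ : SimpleGraph V} {σ : Equiv.Perm V}

def triangleSet (Γ : SimpleGraph V) (v : V) : Set (V × V) :=
  {q | Γ.Adj v q.1 ∧ Γ.Adj v q.2 ∧ Γ.Adj q.1 q.2}

theorem IsGraphAut.ncard_neighborSet_apply (hσ : IsGraphAut Γ σ) (v : V) :
    (Γ.neighborSet (σ v)).ncard = (Γ.neighborSet v).ncard := by
  rw [← Set.ncard_preimage_equiv σ]
  congr 1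
  ext w
  exact hσ v w

theorem IsGraphAut.ncard_triangleSet_apply (hσ : IsGraphAut Γ σ) (v : V) :
    (triangleSet Γ (σ v)).ncard = (triangleSet Γ v).ncard := by
  rw [← Set.ncard_preimage_equiv (σ.prodCongr σ)]
  congr 1
  ext ⟨x, y⟩
  exact and_congr (hσ v x) (and_congr (hσ v y) (hσ x y))

end GraphAut

/-- The conditions of `HasMGRR`, for a vertex type in an arbitrary universe. -/
def IsMGRR {G V : Type*} [Group G] (Γ : SimpleGraph V) (ρ : G →* Equiv.Perm V) (m : ℕ) :
    Prop :=
  (∃ d : ℕ, ∀ v : V, (Γ.neighborSet v).ncard = d) ∧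
    (∀ g : G, IsGraphAut Γ (ρ g)) ∧
    (∀ σ : Equiv.Perm V, IsGraphAut Γ σ → ∃ g : G, ρ g = σ) ∧
    Function.Injective ⇑ρ ∧
    (∀ (g : G) (v : V), ρ g v = v → g = 1) ∧
    (∃ reps : Fin m → V, ∀ v : V, ∃! i : Fin m, ∃ g : G, ρ g (reps i) = v)

section Transport

variable {G V W : Type*} [Group G] {Γ : SimpleGraph V} {ρ : G →* Equiv.Perm V} {m : ℕ}

theorem IsMGRR.comap (e : W ≃ V) (h : IsMGRR Γ ρ m) :
    IsMGRR (Γ.comap e) (e.symm.permCongrHom.toMonoidHom.comp ρ) m := by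
  obtain ⟨⟨d, hreg⟩, hAut, hFull, hInj, hSemi, reps, hOrb⟩ := h
  have hρ : ∀ g w, (e.symm.permCongrHom.toMonoidHom.comp ρ) g w = e.symm (ρ g (e w)) :=
    fun _ _ => rfl
  refine ⟨⟨d, fun w => ?_⟩, fun g x y => ?_, fun σ hσ => ?_, ?_, fun g w hw => ?_,
    ⟨fun i => e.symm (reps i), fun w => ?_⟩⟩
  · rw [← hreg (e w), ← Set.ncard_preimage_equiv e]
    rfl
  · simpa [hρ] using hAut g (e x) (e y)
  · obtain ⟨g, hg⟩ := hFull (e.permCongr σ) fun x y => by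
      simpa [Equiv.permCongr_apply] using hσ (e.symm x) (e.symm y)
    exact ⟨g, Equiv.ext fun w => by simp [hg, Equiv.permCongr_apply]⟩
  · exact e.symm.permCongrHom.injective.comp hInj
  · exact hSemi g (e w) (by simpa [hρ] using congrArg e hw)
  · simpa [hρ, e.symm_apply_eq] using hOrb (e w)

theorem hasMGRR_of_isMGRR {V : Type*} [Finite V] {Γ : SimpleGraph V} {ρ : G →* Equiv.Perm V}
    (h : IsMGRR Γ ρ m) : HasMGRR G m :=
  ⟨_, Fintype.ofFinite _, _, _, h.comap (Finite.equivFin V).symm⟩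

end Transport

section Cayley

variable {G : Type*} [Group G]

/-- `Cay(G, S)` is a GRR of `G`. -/
def IsCayleyRigid (S : Set G) : Prop :=
  ∀ f : Equiv.Perm G, (∀ u v, (f u)⁻¹ * f v ∈ S ↔ u⁻¹ * v ∈ S) → ∃ x, ∀ u, f u = x * u

theorem bijective_apply_of_isMGRR_one {V : Type*} {Γ : SimpleGraph V} {ρ : G →* Equiv.Perm V}
    (h : IsMGRR Γ ρ 1) : ∃ v₀ : V, Bijective fun g : G => ρ g v₀ := by
  obtain ⟨-, -, -, -, hSemi, reps, hOrb⟩ := h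
  refine ⟨reps 0, fun g h hgh => ?_, fun v => ?_⟩
  · have : ρ (h⁻¹ * g) (reps 0) = reps 0 := by
      simp only [map_mul, Equiv.Perm.mul_apply, map_inv, hgh]
      exact (ρ h).symm_apply_apply _
    exact (inv_mul_eq_one.mp (hSemi _ _ this)).symm
  · obtain ⟨i, hi, -⟩ := hOrb v
    rwa [Subsingleton.elim i 0] at hi

theorem exists_isCayleyRigid_of_isMGRR_one {V : Type*} {Γ : SimpleGraph V}
    {ρ : G →* Equiv.Perm V} (h : IsMGRR Γ ρ 1) :
    ∃ S : Set G, 1 ∉ S ∧ (∀ s ∈ S, s⁻¹ ∈ S) ∧ IsCayleyRigid S := by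
  obtain ⟨v₀, hbij⟩ := bijective_apply_of_isMGRR_one h
  obtain ⟨-, hAut, hFull, -⟩ := h
  set S : Set G := {s | Γ.Adj v₀ (ρ s v₀)}
  have hadj : ∀ u v : G, Γ.Adj (ρ u v₀) (ρ v v₀) ↔ u⁻¹ * v ∈ S := fun u v => by
    simpa [S] using (hAut u⁻¹ (ρ u v₀) (ρ v v₀)).symm
  refine ⟨S, fun h1 => ?_, fun s hs => ?_, fun f hf => ?_⟩
  · simp [S] at h1
  · simpa using (hadj s 1).mp (by simpa using (hs : Γ.Adj _ _).symm)
  · let φ := Equiv.ofBijective _ hbij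
    obtain ⟨x, hx⟩ := hFull (φ.permCongr f) <| hbij.2.forall₂.mpr fun u v => by
      simpa [Equiv.permCongr_apply, φ, hadj] using hf u v
    refine ⟨x, fun u => hbij.1 ?_⟩
    simpa [Equiv.permCongr_apply, φ] using (congrArg (· (φ u)) hx).symm

theorem IsCayleyRigid.exists_conj_notMem {S : Set G} (hS : IsCayleyRigid S)
    (hG : ¬ ∀ a b : G, a * b = b * a) : ∃ p ∈ S, ∃ c : G, c⁻¹ * p * c ∉ S := by
  contrapose! hG
  intro a c
  obtain ⟨x, hx⟩ := hS (Equiv.mulRight c) fun u v => by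
    have hconj : (u * c)⁻¹ * (v * c) = c⁻¹ * (u⁻¹ * v) * c := by group
    rw [Equiv.coe_mulRight, hconj]
    exact ⟨fun h => by simpa [mul_assoc] using hG _ h c⁻¹, fun h => hG _ h c⟩
  have hxc : x = c := by simpa using (hx 1).symm
  simpa [hxc] using hx a

end Cayley

section BiCayley

variable {G : Type*} [Group G]

/-- Adjacency of the bi-Cayley graph `BiCay(G, S, S, T)` on two copies of `G`. -/
def biCayleyAdj (S T : Set G) : G × Bool → G × Bool → Prop
  | (u, false), (v, false) => u⁻¹ * v ∈ S
  | (u, false), (v, true) => u⁻¹ * v ∈ T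
  | (u, true), (v, false) => v⁻¹ * u ∈ T
  | (u, true), (v, true) => u⁻¹ * v ∈ S

def biCayley (S T : Set G) (hS1 : (1 : G) ∉ S) (hSinv : ∀ s ∈ S, s⁻¹ ∈ S) :
    SimpleGraph (G × Bool) where
  Adj := biCayleyAdj S T
  symm := by
    constructor
    rintro ⟨u, _ | _⟩ ⟨v, _ | _⟩ h
    all_goals first | exact h | simpa [biCayleyAdj] using hSinv _ h
  loopless := by
    constructor
    rintro ⟨u, _ | _⟩ <;> simpa [biCayleyAdj] using hS1

def leftTranslation : G →* Equiv.Perm (G × Bool) where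
  toFun g := (Equiv.mulLeft g).prodCongr (Equiv.refl Bool)
  map_one' := by ext <;> simp
  map_mul' g h := by ext <;> simp [mul_assoc]

@[simp] theorem leftTranslation_apply (g u : G) (i : Bool) :
    leftTranslation g (u, i) = (g * u, i) := rfl

variable (S T : Set G) (hS1 : (1 : G) ∉ S) (hSinv : ∀ s ∈ S, s⁻¹ ∈ S) {u v : G}

@[simp] theorem biCayley_adj_ff :
    (biCayley S T hS1 hSinv).Adj (u, false) (v, false) ↔ u⁻¹ * v ∈ S := Iff.rfl
@[simp] theorem biCayley_adj_ft :
    (biCayley S T hS1 hSinv).Adj (u, false) (v, true) ↔ u⁻¹ * v ∈ T := Iff.rfl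
@[simp] theorem biCayley_adj_tf :
    (biCayley S T hS1 hSinv).Adj (u, true) (v, false) ↔ v⁻¹ * u ∈ T := Iff.rfl
@[simp] theorem biCayley_adj_tt :
    (biCayley S T hS1 hSinv).Adj (u, true) (v, true) ↔ u⁻¹ * v ∈ S := Iff.rfl

theorem isGraphAut_leftTranslation (g : G) :
    IsGraphAut (biCayley S T hS1 hSinv) (leftTranslation g) := by
  rintro ⟨u, _ | _⟩ ⟨v, _ | _⟩ <;> simp [mul_assoc]

/-- `(w, i) ↦ (w⁻¹, !i)` carries the neighbours of `(1, true)` onto those of `(1, false)`. -/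
theorem ncard_neighborSet_biCayley (x : G × Bool) :
    ((biCayley S T hS1 hSinv).neighborSet x).ncard =
      ((biCayley S T hS1 hSinv).neighborSet (1, false)).ncard := by
  obtain ⟨u, i⟩ := x
  have h1 : (u, i) = leftTranslation u (1, i) := by simp
  rw [h1, (isGraphAut_leftTranslation S T hS1 hSinv u).ncard_neighborSet_apply]
  cases i
  · rfl
  · rw [← Set.ncard_preimage_equiv ((Equiv.inv G).prodCongr Equiv.boolNot)]
    congr 1
    ext ⟨w, _ | _⟩
    · simpa using ⟨fun h => by simpa using hSinv _ h, hSinv w⟩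
    · simp

theorem isMGRR_biCayley_of_full
    (hfull : ∀ σ, IsGraphAut (biCayley S T hS1 hSinv) σ → ∃ g, leftTranslation g = σ) :
    IsMGRR (biCayley S T hS1 hSinv) leftTranslation 2 := by
  refine ⟨⟨_, ncard_neighborSet_biCayley S T hS1 hSinv⟩, isGraphAut_leftTranslation S T hS1 hSinv,
    hfull, fun g h hgh => ?_, fun g ⟨u, i⟩ hx => ?_, ⟨fun i => (1, finTwoEquiv i), fun x => ?_⟩⟩
  · simpa using congrArg (fun σ => (σ (1, false)).1) hgh
  · simpa using congrArg Prod.fst hx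
  · simpa [Prod.ext_iff] using finTwoEquiv.bijective.existsUnique x.2

end BiCayley

section Triple

variable {G : Type*} [Group G]

theorem eq_one_of_mul_mem_triple {a b m : G} (ha : a ≠ 1) (hb : b ≠ 1) (hab : a * b ≠ 1)
    (h : ∀ t ∈ ({1, a, b} : Set G), m * t ∈ ({1, a, b} : Set G)) : m = 1 := by
  have hm : m ∈ ({1, a, b} : Set G) := by simpa using h 1 (by simp)
  rcases hm with rfl | rfl | rfl
  · rfl
  · rcases h b (by simp) with h' | h' | h' <;> simp_all
  · rcases h a (by simp) with h' | h' | h' <;> simp_all [mul_eq_one_comm]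

variable {S : Set G} {a b : G}

theorem ne_one_left_of_triple (hab : a * b⁻¹ ∈ S) (hba : b⁻¹ * a ∉ S) : a ≠ 1 := by
  rintro rfl; simp_all

theorem ne_one_right_of_triple (hab : a * b⁻¹ ∈ S) (hba : b⁻¹ * a ∉ S) : b ≠ 1 := by
  rintro rfl; simp_all

theorem mul_ne_one_of_triple (hab : a * b⁻¹ ∈ S) (hba : b⁻¹ * a ∉ S) : a * b ≠ 1 := by
  intro h
  rw [← eq_inv_of_mul_eq_one_left h] at hab hba
  exact hba hab

theorem mul_inv_mem_of_inv_mul_mem_triple (hSinv : ∀ s ∈ S, s⁻¹ ∈ S) (hba : b⁻¹ * a ∉ S)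
    {t₁ t₂ : G} (ht₁ : t₁ ∈ ({1, a, b} : Set G)) (ht₂ : t₂ ∈ ({1, a, b} : Set G))
    (h : t₁⁻¹ * t₂ ∈ S) : t₂ * t₁⁻¹ ∈ S := by
  rcases ht₁ with rfl | rfl | rfl <;> rcases ht₂ with rfl | rfl | rfl <;>
    first | simp_all | exact absurd (by simpa using hSinv _ h) hba

end Triple

section Triangles

variable {G : Type*} [Group G]

/-- On a triangle `{(1, true), x, y}`, the first clause moves it to the other copy of `G` and the
next two translate it by `u⁻¹`; the last one is no translation and works because of
`mul_inv_mem_of_inv_mul_mem_triple`. -/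
def triangleTransfer : (G × Bool) × (G × Bool) → (G × Bool) × (G × Bool)
  | ((u, true), (v, true)) => ((u, false), (v, false))
  | ((u, false), (v, false)) => ((u⁻¹ * v, false), (u⁻¹, true))
  | ((u, false), (v, true)) => ((u⁻¹, true), (u⁻¹ * v, true))
  | ((u, true), (v, false)) => ((v⁻¹ * u, true), (v⁻¹ * u * v, false))

theorem triangleTransfer_injective : Injective (triangleTransfer (G := G)) := by
  rintro ⟨⟨u, _ | _⟩, ⟨v, _ | _⟩⟩ ⟨⟨u', _ | _⟩, ⟨v', _ | _⟩⟩ h <;>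
    simp_all [triangleTransfer]
  · obtain ⟨h', rfl⟩ := h
    simpa using h'
  · obtain ⟨rfl, h'⟩ := h
    simpa using h'
  · obtain ⟨h₁, h₂⟩ := h
    rw [h₁, mul_right_inj] at h₂
    subst h₂
    simpa using h₁

variable {S : Set G} (hS1 : (1 : G) ∉ S) (hSinv : ∀ s ∈ S, s⁻¹ ∈ S) {a b : G}

theorem triangleTransfer_mem (hba : b⁻¹ * a ∉ S) {q : (G × Bool) × (G × Bool)}
    (hq : q ∈ triangleSet (biCayley S {1, a, b} hS1 hSinv) (1, true)) :
    triangleTransfer q ∈ triangleSet (biCayley S {1, a, b} hS1 hSinv) (1, false) := by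
  obtain ⟨⟨u, _ | _⟩, ⟨v, _ | _⟩⟩ := q <;> obtain ⟨h₁, h₂, h₃⟩ := hq <;>
    simp only [triangleTransfer, triangleSet, Set.mem_ofPred_eq, biCayley_adj_ff, biCayley_adj_ft,
      biCayley_adj_tf, biCayley_adj_tt, inv_one, one_mul, mul_one] at h₁ h₂ h₃ ⊢
  · exact ⟨h₃, h₁, by simpa [mul_assoc] using h₂⟩
  · exact ⟨h₁, h₃, by simpa using h₂⟩
  · refine ⟨h₃, ?_, by simpa [mul_assoc] using h₂⟩
    simpa [mul_assoc] using mul_inv_mem_of_inv_mul_mem_triple hSinv hba h₂ h₃ (by simpa using h₁)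
  · exact ⟨h₁, h₂, h₃⟩

theorem mem_triangleSet_false (hab : a * b⁻¹ ∈ S) :
    ((a, true), (a * b⁻¹, false)) ∈ triangleSet (biCayley S {1, a, b} hS1 hSinv) (1, false) := by
  simp [triangleSet, hab]

theorem notMem_image_triangleTransfer (hba : b⁻¹ * a ∉ S) :
    ((a, true), (a * b⁻¹, false)) ∉
      triangleTransfer '' triangleSet (biCayley S {1, a, b} hS1 hSinv) (1, true) := by
  rintro ⟨⟨⟨u, _ | _⟩, ⟨v, _ | _⟩⟩, ⟨hu, -, -⟩, h⟩ <;> simp [triangleTransfer] at h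
  obtain ⟨h₁, h₂⟩ := h
  rw [h₁, mul_right_inj] at h₂
  subst h₂
  rw [inv_inv] at h₁
  apply hba
  simpa [← eq_inv_mul_of_mul_eq h₁] using hu

theorem ncard_triangleSet_true_lt_false [Finite G] (hab : a * b⁻¹ ∈ S) (hba : b⁻¹ * a ∉ S) :
    (triangleSet (biCayley S {1, a, b} hS1 hSinv) (1, true)).ncard <
      (triangleSet (biCayley S {1, a, b} hS1 hSinv) (1, false)).ncard := by
  rw [← Set.ncard_image_of_injective _ triangleTransfer_injective]
  refine Set.ncard_lt_ncard ((Set.ssubset_iff_of_subset ?_).mpr ?_) (Set.toFinite _)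
  · rintro _ ⟨q, hq, rfl⟩
    exact triangleTransfer_mem hS1 hSinv hba hq
  · exact ⟨_, mem_triangleSet_false hS1 hSinv hab, notMem_image_triangleTransfer hS1 hSinv hba⟩

end Triangles

section Automorphisms

variable {G : Type*} [Group G] [Finite G] {S : Set G} (hS1 : (1 : G) ∉ S)
  (hSinv : ∀ s ∈ S, s⁻¹ ∈ S) {a b : G} (hab : a * b⁻¹ ∈ S) (hba : b⁻¹ * a ∉ S)
include hab hba

theorem snd_apply_of_isGraphAut_biCayley {σ : Equiv.Perm (G × Bool)}
    (hσ : IsGraphAut (biCayley S {1, a, b} hS1 hSinv) σ) (x : G × Bool) : (σ x).2 = x.2 := by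
  have hlayer : ∀ y : G × Bool, (triangleSet (biCayley S {1, a, b} hS1 hSinv) y).ncard =
      (triangleSet (biCayley S {1, a, b} hS1 hSinv) (1, y.2)).ncard := fun ⟨u, i⟩ => by
    simpa using (isGraphAut_leftTranslation S _ hS1 hSinv u).ncard_triangleSet_apply (1, i)
  have h := hσ.ncard_triangleSet_apply x
  rw [hlayer, hlayer x] at h
  have hlt := ncard_triangleSet_true_lt_false hS1 hSinv hab hba
  cases hi : (σ x).2 <;> cases hj : x.2 <;> simp_all

theorem exists_leftTranslation_eq_of_isGraphAut_biCayley (hS : IsCayleyRigid S)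
    {σ : Equiv.Perm (G × Bool)} (hσ : IsGraphAut (biCayley S {1, a, b} hS1 hSinv) σ) :
    ∃ g, leftTranslation g = σ := by
  have hsnd := snd_apply_of_isGraphAut_biCayley hS1 hSinv hab hba hσ
  have hσ_eq : ∀ u i, σ (u, i) = ((σ (u, i)).1, i) := fun u i => Prod.ext rfl (hsnd (u, i))
  have htrans : ∀ i : Bool, ∃ x : G, ∀ u, (σ (u, i)).1 = x * u := by
    intro i
    have hinj : Injective fun u => (σ (u, i)).1 := fun u v huv => by
      simpa using σ.injective (Prod.ext huv (by simp [hsnd]))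
    refine hS (Equiv.ofBijective _ (Finite.injective_iff_bijective.mp hinj)) fun u v => ?_
    have := hσ (u, i) (v, i)
    rw [hσ_eq u i, hσ_eq v i] at this
    cases i <;> simpa using this
  obtain ⟨x, hx⟩ := htrans false
  obtain ⟨y, hy⟩ := htrans true
  have hxy : x⁻¹ * y = 1 := by
    refine eq_one_of_mul_mem_triple (ne_one_left_of_triple hab hba)
      (ne_one_right_of_triple hab hba) (mul_ne_one_of_triple hab hba) fun t ht => ?_
    have := (hσ (1, false) (t, true)).mpr (by simpa using ht)
    rw [hσ_eq 1 false, hσ_eq t true, hx, hy] at this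
    simpa [mul_assoc] using this
  obtain rfl : x = y := inv_mul_eq_one.mp hxy
  refine ⟨x, Equiv.ext fun ⟨u, i⟩ => ?_⟩
  rw [hσ_eq]
  cases i <;> simp [hx, hy]

end Automorphisms

/-- a non-abelian finite group admitting a GRR admits a 2-GRR. -/
theorem statement_8 (G : Type*) [Group G] [Finite G]
    (hG : ¬ ∀ a b : G, a * b = b * a)
    (hGRR : HasMGRR G 1) :
    HasMGRR G 2 := by
  obtain ⟨V, _, Γ, ρ, hΓ⟩ := hGRR
  obtain ⟨S, hS1, hSinv, hS⟩ := exists_isCayleyRigid_of_isMGRR_one hΓ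
  obtain ⟨p, hp, c, hpc⟩ := hS.exists_conj_notMem hG
  have hab : p * c * c⁻¹ ∈ S := by simpa using hp
  have hba : c⁻¹ * (p * c) ∉ S := by simpa [mul_assoc] using hpc
  exact hasMGRR_of_isMGRR <| isMGRR_biCayley_of_full S _ hS1 hSinv fun _ =>
    exists_leftTranslation_eq_of_isGraphAut_biCayley hS1 hSinv hab hba hS
end

section
/- Let G be a non-abelian finite group admitting a GRR and let m ≥ 1 be an integer. Then G admits an m-GRR. -/
/-!
Let `Cay(H, S)` be a GRR of `H`. As `H` is not abelian, `S` is not closed under conjugation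
(otherwise right multiplications would be automorphisms of `Cay(H, S)`): pick `x ∈ S` and `t`
with `t * x * t⁻¹ ∉ S`. On `H × ZMod m` put a copy of `Cay(H, S)` on every layer and join
`(a, i)` to `(a * k, i + 1)` for `k ∈ K = {1, t, t * x}` if `i = 0`, and for `k ∈ K⁻¹` otherwise.
Left multiplication on the first coordinate acts semiregularly with the `m` layers as orbits,
and the graph is regular.

Counting triangles through a vertex, the pair `(t, t * x)` of `K` contributes through `x ∈ S`,
whereas in `K⁻¹` it would need `t * x⁻¹ * t⁻¹ ∈ S`. Hence layer `0` is the only layer with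
fewest triangles and layer `1` the only one with most, so every automorphism fixes both layers
and then, going around the cycle, every layer. On each layer it is a left translation since
`Cay(H, S)` is a GRR, and consecutive translations agree because only `c = 1` satisfies
`c * K = K`.
-/

open Pointwise

theorem Set.ncard_setOf_congr {α β : Type*} {p : α → Prop} {q : β → Prop} (e : α ≃ β)
    (h : ∀ a, p a ↔ q (e a)) : {a | p a}.ncard = {b | q b}.ncard :=
  Set.ncard_congr' (e.subtypeEquiv h)

theorem Set.ncard_setOf_prod {α β : Type*} [Fintype α] [Finite β] (p : α → β → Prop) :
    {x : α × β | p x.1 x.2}.ncard = ∑ a, {b | p a b}.ncard :=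
  (Nat.card_congr (Equiv.subtypeProdEquivSigmaSubtype p)).trans Nat.card_sigma

theorem HasMGRR.of_mulEquiv {G G' : Type*} [Group G] [Group G'] {m : ℕ} (e : G ≃* G')
    (h : HasMGRR G m) : HasMGRR G' m := by
  obtain ⟨V, hV, Γ, ρ, hreg, haut, hall, hinj, hfree, reps, horb⟩ := h
  refine ⟨V, hV, Γ, ρ.comp e.symm.toMonoidHom, hreg, fun g => haut _, fun σ hσ => ?_,
    hinj.comp e.symm.injective, fun g v hv => ?_, reps, fun v => ?_⟩
  · obtain ⟨g, rfl⟩ := hall σ hσ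
    exact ⟨e g, by simp⟩
  · simpa using congrArg e (hfree _ v hv)
  · simpa [e.symm.surjective.exists] using horb v

section Cayley

variable {H : Type*} [Group H] {S : Set H}

structure IsGRRConnectionSet (S : Set H) : Prop where
  one_notMem : (1 : H) ∉ S
  inv_eq : S⁻¹ = S
  exists_eq_mul_left : ∀ f : Equiv.Perm H, (∀ a b, (f a)⁻¹ * f b ∈ S ↔ a⁻¹ * b ∈ S) →
    ∃ c, ∀ g, f g = c * g

theorem IsGRRConnectionSet.inv_mem_iff (hS : IsGRRConnectionSet S) {s : H} :
    s⁻¹ ∈ S ↔ s ∈ S := by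
  rw [← Set.mem_inv, hS.inv_eq]

theorem IsGRRConnectionSet.exists_of_hasMGRR_one (h : HasMGRR H 1) :
    ∃ S : Set H, IsGRRConnectionSet S := by
  obtain ⟨V, -, Γ, ρ, -, haut, hall, -, hfree, reps, horb⟩ := h
  let orbit : H → V := fun g => ρ g (reps 0)
  have hmul : ∀ g h, orbit (g * h) = ρ g (orbit h) := fun g h => by
    simp only [orbit, map_mul, Equiv.Perm.mul_apply]
  have hinj : orbit.Injective := fun a b hab => by
    have hfix : orbit (b⁻¹ * a) = orbit 1 := by rw [hmul, hab, ← hmul, inv_mul_cancel]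
    simp only [orbit, map_one, Equiv.Perm.one_apply] at hfix
    exact (inv_mul_eq_one.1 (hfree _ _ hfix)).symm
  have hsurj : orbit.Surjective := fun v => by
    obtain ⟨i, ⟨g, hg⟩, -⟩ := horb v
    exact ⟨g, by rwa [Subsingleton.elim i 0] at hg⟩
  let e : H ≃ V := .ofBijective orbit ⟨hinj, hsurj⟩
  -- along `e`, `Γ` is the Cayley graph of the labels of the neighbours of `e 1`
  have hadj : ∀ a b, Γ.Adj (e a) (e b) ↔ Γ.Adj (e 1) (e (a⁻¹ * b)) := fun a b => by
    change Γ.Adj (orbit a) (orbit b) ↔ Γ.Adj (orbit 1) (orbit (a⁻¹ * b))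
    rw [← inv_mul_cancel a, hmul, hmul, haut]
  refine ⟨{s | Γ.Adj (e 1) (e s)}, ⟨fun h => Γ.loopless.irrefl _ h, ?_, fun f hf => ?_⟩⟩
  · ext s
    simpa using (hadj s 1).symm.trans (Γ.adj_comm _ _) |>.trans (hadj 1 s)
  · obtain ⟨c, hc⟩ := hall (e.permCongr f) fun u v => by
      simpa [Equiv.permCongr_apply] using
        (hadj _ _).trans ((hf _ _).trans (hadj (e.symm u) (e.symm v)).symm)
    refine ⟨c, fun g => hinj ?_⟩
    have := congrArg (· (e g)) hc
    simp only [Equiv.permCongr_apply, Equiv.symm_apply_apply] at this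
    rw [hmul]
    exact this.symm

theorem IsGRRConnectionSet.exists_conj_notMem (hS : IsGRRConnectionSet S)
    (hH : ¬ ∀ a b : H, a * b = b * a) : ∃ t x, x ∈ S ∧ t * x * t⁻¹ ∉ S := by
  by_contra! hconj
  refine hH fun a b => ?_
  obtain ⟨c, hc⟩ := hS.exists_eq_mul_left (Equiv.mulRight b) fun u v => by
    refine ⟨fun h => by simpa [mul_assoc] using hconj b _ h, fun h => ?_⟩
    simpa [mul_assoc] using hconj b⁻¹ _ h
  have hcb : c = b := by simpa using (hc 1).symm
  simpa [hcb] using hc a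

end Cayley

noncomputable def SimpleGraph.triangleCountAt {V : Type*} (Γ : SimpleGraph V) (v : V) : ℕ :=
  {q : V × V | Γ.Adj v q.1 ∧ Γ.Adj v q.2 ∧ Γ.Adj q.1 q.2}.ncard

theorem SimpleGraph.triangleCountAt_apply {V : Type*} {Γ : SimpleGraph V} {σ : Equiv.Perm V}
    (hσ : IsGraphAut Γ σ) (v : V) : Γ.triangleCountAt (σ v) = Γ.triangleCountAt v :=
  (Set.ncard_setOf_congr (σ.prodCongr σ) fun q => by
    rw [Equiv.prodCongr_apply, Prod.map_fst, Prod.map_snd, hσ, hσ, hσ]).symm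

section MultiCayley

variable {H ι : Type*} [Group H]

noncomputable def cayleyTriangleCount (A B D : Set H) : ℕ :=
  {q : H × H | q.1 ∈ A ∧ q.2 ∈ B ∧ q.1⁻¹ * q.2 ∈ D}.ncard

theorem cayleyTriangleCount_comm (A B D : Set H) :
    cayleyTriangleCount A B D = cayleyTriangleCount B A D⁻¹ :=
  Set.ncard_setOf_congr (Equiv.prodComm H H) fun q => by
    simp only [Equiv.prodComm_apply, Prod.fst_swap, Prod.snd_swap, Set.mem_inv, mul_inv_rev,
      inv_inv]
    tauto

theorem cayleyTriangleCount_inv_left (A B D : Set H) :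
    cayleyTriangleCount A B D = cayleyTriangleCount A⁻¹ D B := by
  have hinv : Function.Involutive fun q : H × H => (q.1⁻¹, q.1⁻¹ * q.2) := fun q => by simp
  refine Set.ncard_setOf_congr hinv.toPerm fun q => ?_
  simp only [Function.Involutive.coe_toPerm]
  simp [and_comm (a := q.2 ∈ B)]

theorem cayleyTriangleCount_empty_left (B D : Set H) : cayleyTriangleCount ∅ B D = 0 := by
  simp [cayleyTriangleCount]

theorem cayleyTriangleCount_empty_middle (A D : Set H) : cayleyTriangleCount A ∅ D = 0 := by
  simp [cayleyTriangleCount]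

theorem cayleyTriangleCount_empty_right (A B : Set H) : cayleyTriangleCount A B ∅ = 0 := by
  simp [cayleyTriangleCount]

def symmConn (D : ι → ι → Set H) (i j : ι) : Set H := D i j ∪ (D j i)⁻¹

theorem symmConn_inv (D : ι → ι → Set H) (i j : ι) : (symmConn D i j)⁻¹ = symmConn D j i := by
  rw [symmConn, symmConn, Set.union_inv, inv_inv, Set.union_comm]

/-- The `|ι|`-Cayley graph over `H` with oriented connection sets `D`: `layerMul` acts on it
semiregularly, with the layers `H × {i}` as orbits. -/
def multiCayleyGraph (D : ι → ι → Set H) : SimpleGraph (H × ι) :=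
  SimpleGraph.fromRel fun p q => p.1⁻¹ * q.1 ∈ D p.2 q.2

def layerMul : H →* Equiv.Perm (H × ι) where
  toFun g := (Equiv.mulLeft g).prodCongr (Equiv.refl ι)
  map_one' := by ext <;> simp
  map_mul' g h := by ext <;> simp [mul_assoc]

@[simp]
theorem layerMul_apply (g : H) (p : H × ι) : layerMul g p = (g * p.1, p.2) := rfl

variable {D : ι → ι → Set H}

theorem multiCayleyGraph_adj (hD : ∀ i, (1 : H) ∉ D i i) {p q : H × ι} :
    (multiCayleyGraph D).Adj p q ↔ p.1⁻¹ * q.1 ∈ symmConn D p.2 q.2 := by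
  rw [multiCayleyGraph, SimpleGraph.fromRel_adj, symmConn, Set.mem_union, Set.mem_inv,
    mul_inv_rev, inv_inv, and_iff_right_iff_imp]
  rintro h rfl
  simp [hD] at h

theorem isGraphAut_layerMul (hD : ∀ i, (1 : H) ∉ D i i) (g : H) :
    IsGraphAut (multiCayleyGraph D) (layerMul g) := fun p q => by
  simp [multiCayleyGraph_adj hD, mul_assoc]

theorem ncard_neighborSet_multiCayleyGraph [Finite H] [Fintype ι] (hD : ∀ i, (1 : H) ∉ D i i)
    (p : H × ι) :
    ((multiCayleyGraph D).neighborSet p).ncard = ∑ j, (symmConn D p.2 j).ncard := by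
  refine (Set.ncard_setOf_congr ((Equiv.mulLeft p.1⁻¹).prodCongr (Equiv.refl ι) |>.trans
    (Equiv.prodComm H ι)) fun q => ?_).trans (Set.ncard_setOf_prod fun j c => c ∈ symmConn D p.2 j)
  simp [multiCayleyGraph_adj hD]

/-- Triangles through a vertex of layer `i` whose other two vertices lie in layers `j` and `k`,
counted as ordered pairs. -/
noncomputable def layerTriangles (C : ι → ι → Set H) (i j k : ι) : ℕ :=
  cayleyTriangleCount (C i j) (C i k) (C j k)

theorem layerTriangles_swap₁₂ (D : ι → ι → Set H) (i j k : ι) :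
    layerTriangles (symmConn D) i j k = layerTriangles (symmConn D) j i k := by
  rw [layerTriangles, cayleyTriangleCount_inv_left, symmConn_inv, layerTriangles]

theorem layerTriangles_swap₂₃ (D : ι → ι → Set H) (i j k : ι) :
    layerTriangles (symmConn D) i j k = layerTriangles (symmConn D) i k j := by
  rw [layerTriangles, cayleyTriangleCount_comm, symmConn_inv, layerTriangles]

noncomputable def triangleCountOfLayer [Fintype ι] (D : ι → ι → Set H) (i : ι) : ℕ :=
  ∑ j, ∑ k, layerTriangles (symmConn D) i j k

theorem triangleCountAt_multiCayleyGraph [Finite H] [Fintype ι] (hD : ∀ i, (1 : H) ∉ D i i)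
    (p : H × ι) : (multiCayleyGraph D).triangleCountAt p = triangleCountOfLayer D p.2 := by
  rw [triangleCountOfLayer,
    ← Fintype.sum_prod_type fun jk => layerTriangles (symmConn D) p.2 jk.1 jk.2]
  let e : H × ι ≃ H × ι := (Equiv.mulLeft p.1⁻¹).prodCongr (Equiv.refl ι)
  refine (Set.ncard_setOf_congr ((e.prodCongr e).trans
    ((Equiv.prodProdProdComm H ι H ι).trans (Equiv.prodComm _ _))) fun q => ?_).trans
    (Set.ncard_setOf_prod fun (jk : ι × ι) (bc : H × H) => bc.1 ∈ symmConn D p.2 jk.1 ∧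
      bc.2 ∈ symmConn D p.2 jk.2 ∧ bc.1⁻¹ * bc.2 ∈ symmConn D jk.1 jk.2)
  simp [e, multiCayleyGraph_adj hD, mul_assoc]

theorem exists_apply_eq_mul_of_isGraphAut (hD : ∀ i, (1 : H) ∉ D i i)
    {σ : Equiv.Perm (H × ι)} (hσ : IsGraphAut (multiCayleyGraph D) σ)
    (hlayer : ∀ p, (σ p).2 = p.2) {i : ι} (hS : IsGRRConnectionSet (symmConn D i i)) :
    ∃ c, ∀ g, σ (g, i) = (c * g, i) := by
  have hσi : ∀ g, σ (g, i) = ((σ (g, i)).1, i) := fun g => Prod.ext rfl (hlayer _)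
  have hσi' : ∀ g, σ.symm (g, i) = ((σ.symm (g, i)).1, i) := fun g =>
    Prod.ext rfl (by simpa using (hlayer (σ.symm (g, i))).symm)
  let f : Equiv.Perm H :=
    { toFun g := (σ (g, i)).1
      invFun g := (σ.symm (g, i)).1
      left_inv g := by simp only [← hσi, Equiv.symm_apply_apply]
      right_inv g := by simp only [← hσi', Equiv.apply_symm_apply] }
  obtain ⟨c, hc⟩ := hS.exists_eq_mul_left f fun a b => by
    have := hσ (a, i) (b, i)
    rw [multiCayleyGraph_adj hD, multiCayleyGraph_adj hD, hlayer, hlayer] at this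
    exact this
  exact ⟨c, fun g => (hσi g).trans (by rw [← hc g]; rfl)⟩

theorem mul_mem_symmConn_iff_of_isGraphAut (hD : ∀ i, (1 : H) ∉ D i i)
    {σ : Equiv.Perm (H × ι)} (hσ : IsGraphAut (multiCayleyGraph D) σ) {c : ι → H}
    (hc : ∀ g i, σ (g, i) = (c i * g, i)) (i j : ι) (k : H) :
    (c i)⁻¹ * c j * k ∈ symmConn D i j ↔ k ∈ symmConn D i j := by
  have := hσ (1, i) (k, j)
  rwa [hc, hc, multiCayleyGraph_adj hD, multiCayleyGraph_adj hD, mul_one, inv_one, one_mul,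
    ← mul_assoc] at this

end MultiCayley

theorem hasMGRR_of_isGraphAut_iff {H ι : Type} [Group H] [Finite H] [Fintype ι] [Nonempty ι]
    {m : ℕ} (hcard : Fintype.card ι = m) (Γ : SimpleGraph (H × ι))
    (hreg : ∃ d, ∀ v, (Γ.neighborSet v).ncard = d)
    (haut : ∀ σ, IsGraphAut Γ σ ↔ ∃ c, layerMul c = σ) : HasMGRR H m := by
  have := Fintype.ofFinite H
  let e := Fintype.equivFinOfCardEq hcard
  obtain ⟨i₀⟩ := ‹Nonempty ι›
  refine ⟨H × ι, inferInstance, Γ, layerMul, hreg, fun g => (haut _).2 ⟨g, rfl⟩,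
    fun σ hσ => (haut σ).1 hσ, fun g g' h => ?_, fun g p hp => ?_,
    fun i => (1, e.symm i), fun p => ⟨e p.2, ⟨p.1, by simp⟩, ?_⟩⟩
  · simpa using congrArg (fun σ : Equiv.Perm (H × ι) => (σ (1, i₀)).1) h
  · simpa using congrArg Prod.fst hp
  · rintro i ⟨g, hg⟩
    simp [← hg]

theorem snd_apply_eq_of_snd_zero_one {V : Type*} [Finite V] {m : ℕ} [NeZero m]
    {Γ : SimpleGraph (V × ZMod m)}
    (hnear : ∀ p q, Γ.Adj p q → q.2 = p.2 - 1 ∨ q.2 = p.2 ∨ q.2 = p.2 + 1)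
    (hdown : ∀ g i, Γ.Adj (g, i + 1) (g, i)) {σ : Equiv.Perm (V × ZMod m)}
    (hσ : IsGraphAut Γ σ) (h0 : ∀ g, (σ (g, 0)).2 = 0) (h1 : ∀ g, (σ (g, 1)).2 = 1)
    (p : V × ZMod m) : (σ p).2 = p.2 := by
  -- a finite layer mapped into itself is mapped onto itself
  have honto : ∀ i, (∀ g, (σ (g, i)).2 = i) → ∀ g j, (σ (g, j)).2 = i → j = i := by
    intro i hi g j hj
    have hmaps : Set.MapsTo σ {q | q.2 = i} {q | q.2 = i} := fun q (hq : q.2 = i) => by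
      obtain ⟨a, b⟩ := q
      obtain rfl : b = i := hq
      exact hi a
    obtain ⟨q, hq, hqσ⟩ := hmaps.restrict_surjective_iff.1 (Finite.surjective_of_injective
      (hmaps.restrict_inj.2 σ.injective.injOn)) hj
    exact (congrArg Prod.snd (σ.injective hqσ)).symm.trans hq
  have hstep : ∀ i, (∀ g, (σ (g, i)).2 = i) → (∀ g, (σ (g, i + 1)).2 = i + 1) →
      ∀ g, (σ (g, i + 1 + 1)).2 = i + 1 + 1 := by
    intro i hi hi1 g
    have hadj := (hσ _ _).2 (hdown g (i + 1))
    rcases hnear _ _ hadj.symm with h | h | h <;> rw [hi1] at h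
    · rw [honto i hi g (i + 1 + 1) (by rw [h]; ring)]
      exact hi g
    · rw [honto (i + 1) hi1 g (i + 1 + 1) h]
      exact hi1 g
    · exact h
  have hnat : ∀ n : ℕ, (∀ g, (σ (g, n)).2 = n) ∧ ∀ g, (σ (g, (n + 1 : ℕ))).2 = (n + 1 : ℕ) := by
    intro n
    induction n with
    | zero => simpa using ⟨h0, h1⟩
    | succ n ih =>
      refine ⟨ih.2, ?_⟩
      push_cast at ih ⊢
      exact hstep _ ih.1 ih.2
  obtain ⟨a, b⟩ := p
  obtain ⟨n, rfl⟩ := ZMod.natCast_zmod_surjective b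
  exact (hnat n).1 a

theorem ZMod.natCast_ne_zero_of_lt {m n : ℕ} (h0 : 0 < n) (h : n < m) : (n : ZMod m) ≠ 0 := by
  rw [Ne, ZMod.natCast_eq_zero_iff]
  exact fun hd => absurd (Nat.le_of_dvd h0 hd) (by omega)

theorem sum_eq_sum_near_of_eq_zero {M : Type*} [AddCommMonoid M] {m : ℕ} [NeZero m]
    {f : ZMod m → M} (i : ZMod m) (hf : ∀ j, j ≠ i - 1 → j ≠ i → j ≠ i + 1 → f j = 0) :
    ∑ j, f j = ∑ j ∈ {i - 1, i, i + 1}, f j := by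
  refine (Finset.sum_subset (Finset.subset_univ _) fun j _ hj => ?_).symm
  simp only [Finset.mem_insert, Finset.mem_singleton, not_or] at hj
  exact hf j hj.1 hj.2.1 hj.2.2

section CrossSet

variable {H : Type*} [Group H] {S : Set H} {t x : H}

def crossSet (t x : H) : Set H := {1, t, t * x}

theorem ne_of_conj_notMem (hS1 : (1 : H) ∉ S) (hx : x ∈ S) (htx : t * x * t⁻¹ ∉ S) :
    x ≠ 1 ∧ t ≠ 1 ∧ t ≠ x := by
  refine ⟨fun h => hS1 (h ▸ hx), fun h => htx (by simpa [h] using hx), fun h => htx ?_⟩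
  simpa [h] using hx

theorem eq_one_of_mul_crossSet (hS1 : (1 : H) ∉ S) (hx : x ∈ S) (htx : t * x * t⁻¹ ∉ S) {c : H}
    (hc : ∀ k, c * k ∈ crossSet t x ↔ k ∈ crossSet t x) : c = 1 := by
  obtain ⟨hx1, ht1, htx'⟩ := ne_of_conj_notMem hS1 hx htx
  have hmem : ∀ k, k ∈ crossSet t x → c * k ∈ crossSet t x := fun k => (hc k).2
  have hxK : x ∉ crossSet t x := by
    rintro (h | h | h)
    exacts [hx1 h, htx' h.symm, ht1 (by simpa using h.symm)]
  simp only [crossSet, Set.mem_insert_iff, Set.mem_singleton_iff] at hmem hxK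
  rcases (by simpa using hmem 1 (by simp) : c = 1 ∨ c = t ∨ c = t * x) with h | h | h
  · exact h
  · rw [h] at hmem ⊢
    rcases hmem t (by simp) with h | h | h
    · exact absurd (by simpa [← mul_assoc, h] using hmem (t * x) (by simp)) hxK
    · simpa using h
    · exact absurd (mul_left_cancel h) htx'
  · rw [h] at hmem ⊢
    rcases hmem t (by simp) with h | h | h
    · exact absurd (by simpa [← mul_assoc, h] using hmem (t * x) (by simp)) hxK
    · simpa using h
    · exact absurd (by simpa using h) ht1

theorem cayleyTriangleCount_crossSet (hS : IsGRRConnectionSet S) (hx : x ∈ S)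
    (htx : t * x * t⁻¹ ∉ S) :
    cayleyTriangleCount (crossSet t x) (crossSet t x) S =
      cayleyTriangleCount (crossSet t x)⁻¹ (crossSet t x)⁻¹ S + 2 := by
  obtain ⟨hx1, -, -⟩ := ne_of_conj_notMem hS.one_notMem hx htx
  set K := crossSet t x
  set P : Set (H × H) := {(t, t * x), (t * x, t)}
  have hinv : cayleyTriangleCount K⁻¹ K⁻¹ S =
      {q : H × H | q.1 ∈ K ∧ q.2 ∈ K ∧ q.1 * q.2⁻¹ ∈ S}.ncard :=
    Set.ncard_setOf_congr ((Equiv.inv H).prodCongr (Equiv.inv H)) fun q => by simp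
  -- if `a = 1`, `b = 1` or `a = b`, then `a⁻¹ * b` and `a * b⁻¹` are inverse to each other
  have hsame : ∀ a ∈ K, ∀ b ∈ K, (a, b) ∉ P → (a⁻¹ * b ∈ S ↔ a * b⁻¹ ∈ S) := by
    rintro a (rfl | rfl | rfl) b (rfl | rfl | rfl) hP <;>
      (try simp only [inv_one, one_mul, mul_one, inv_mul_cancel, mul_inv_cancel]) <;>
      first
      | exact Iff.rfl
      | exact hS.inv_mem_iff.symm
      | exact hS.inv_mem_iff
      | exact absurd (by simp [P]) hP
  have hP : ∀ q ∈ P, q.1 ∈ K ∧ q.2 ∈ K ∧ q.1⁻¹ * q.2 ∈ S ∧ q.1 * q.2⁻¹ ∉ S := by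
    rintro _ (rfl | rfl)
    · refine ⟨by simp [K, crossSet], by simp [K, crossSet], by simpa using hx, fun h => htx ?_⟩
      simpa [mul_assoc] using hS.inv_mem_iff.2 h
    · refine ⟨by simp [K, crossSet], by simp [K, crossSet], ?_, fun h => htx ?_⟩
      · simpa [mul_assoc] using hS.inv_mem_iff.2 hx
      · simpa [mul_assoc] using h
  have hsplit : {q : H × H | q.1 ∈ K ∧ q.2 ∈ K ∧ q.1⁻¹ * q.2 ∈ S} =
      {q | q.1 ∈ K ∧ q.2 ∈ K ∧ q.1 * q.2⁻¹ ∈ S} ∪ P := by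
    ext ⟨a, b⟩
    by_cases hab : (a, b) ∈ P
    · simp only [Set.mem_union, hab, or_true, iff_true]
      exact ⟨(hP _ hab).1, (hP _ hab).2.1, (hP _ hab).2.2.1⟩
    · simp only [Set.mem_union, hab, or_false]
      exact and_congr_right fun ha => and_congr_right fun hb => hsame a ha b hb hab
  have hfin : {q : H × H | q.1 ∈ K ∧ q.2 ∈ K ∧ q.1 * q.2⁻¹ ∈ S}.Finite :=
    ((Set.toFinite {1, t, t * x}).prod (Set.toFinite {1, t, t * x})).subset
      fun q hq => ⟨hq.1, hq.2.1⟩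
  rw [cayleyTriangleCount, hsplit, Set.ncard_union_eq (Set.disjoint_right.2 fun q hq h =>
    (hP q hq).2.2.2 h.2.2) hfin, hinv, Set.ncard_pair (by simpa using hx1)]

end CrossSet

section Cycle

variable {H : Type*} [Group H] {m : ℕ} {S : Set H} {t x : H}

def crossConn (t x : H) (i : ZMod m) : Set H :=
  if i = 0 then crossSet t x else (crossSet t x)⁻¹

def cycleConn (S : Set H) (t x : H) (i j : ZMod m) : Set H :=
  if j = i then S else if j = i + 1 then crossConn t x i else ∅

theorem ncard_crossConn (i : ZMod m) : (crossConn t x i).ncard = (crossSet t x).ncard := by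
  unfold crossConn
  split_ifs
  exacts [rfl, Set.ncard_inv _]

theorem one_notMem_cycleConn (hS1 : (1 : H) ∉ S) (i : ZMod m) :
    (1 : H) ∉ cycleConn S t x i i := by
  simpa [cycleConn] using hS1

theorem crossConn_succ_of_two_eq_zero [Fact (1 < m)] (h2 : (2 : ZMod m) = 0) (i : ZMod m) :
    crossConn t x (i + 1) = (crossConn t x i)⁻¹ := by
  obtain rfl : m = 2 := by
    have := Nat.le_of_dvd two_pos ((ZMod.natCast_eq_zero_iff 2 m).1 (by exact_mod_cast h2))
    have := Fact.out (p := 1 < m)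
    omega
  obtain rfl | rfl : i = 0 ∨ i = 1 := by revert i; decide
  · simp [crossConn]
  · simp [crossConn, show (1 + 1 : ZMod 2) = 0 from rfl]

theorem symmConn_cycleConn_self (hS : S⁻¹ = S) (i : ZMod m) :
    symmConn (cycleConn S t x) i i = S := by
  simp [symmConn, cycleConn, hS]

theorem symmConn_cycleConn_succ [Fact (1 < m)] (i : ZMod m) :
    symmConn (cycleConn S t x) i (i + 1) = crossConn t x i := by
  -- for `m = 2` the layers `i` and `i + 1` are also joined from `i + 1` to `i + 1 + 1 = i`
  by_cases h2 : i = i + 1 + 1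
  · simp [symmConn, cycleConn, ← h2, crossConn_succ_of_two_eq_zero (by linear_combination -h2)]
  · simp [symmConn, cycleConn, h2]

theorem symmConn_cycleConn_succ_left [Fact (1 < m)] (i : ZMod m) :
    symmConn (cycleConn S t x) (i + 1) i = (crossConn t x i)⁻¹ := by
  rw [← symmConn_inv, symmConn_cycleConn_succ]

theorem symmConn_cycleConn_eq_empty {i j : ZMod m} (hj₁ : j ≠ i - 1) (hj₂ : j ≠ i)
    (hj₃ : j ≠ i + 1) : symmConn (cycleConn S t x) i j = ∅ := by
  have : i ≠ j + 1 := fun h => hj₁ (eq_sub_of_add_eq h.symm)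
  simp [symmConn, cycleConn, hj₂, hj₃, this, Ne.symm hj₂]

theorem ncard_symmConn_cycleConn [Fact (1 < m)] (hS : S⁻¹ = S) (i j : ZMod m) :
    (symmConn (cycleConn S t x) i j).ncard =
      if j - i = 0 then S.ncard
      else if j - i = 1 ∨ j - i = -1 then (crossSet t x).ncard else 0 := by
  by_cases h0 : j = i
  · subst h0
    simp [symmConn_cycleConn_self hS]
  by_cases h1 : j = i + 1
  · subst h1
    simp [symmConn_cycleConn_succ, ncard_crossConn]
  by_cases h2 : j = i - 1
  · obtain rfl : i = j + 1 := by rw [h2]; ring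
    simp [symmConn_cycleConn_succ_left, ncard_crossConn, Set.ncard_inv]
  · have hd0 : j - i ≠ 0 := sub_ne_zero.2 h0
    have hd1 : j - i ≠ 1 := fun h => h1 (by linear_combination h)
    have hd2 : j - i ≠ -1 := fun h => h2 (by linear_combination h)
    simp [symmConn_cycleConn_eq_empty h2 h0 h1, hd0, hd1, hd2]

theorem exists_ncard_neighborSet_cycleConn [Finite H] [NeZero m] [Fact (1 < m)]
    (hS : IsGRRConnectionSet S) :
    ∃ d, ∀ p : H × ZMod m, ((multiCayleyGraph (cycleConn S t x)).neighborSet p).ncard = d := by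
  refine ⟨∑ d : ZMod m, if d = 0 then S.ncard
    else if d = 1 ∨ d = -1 then (crossSet t x).ncard else 0, fun p => ?_⟩
  rw [ncard_neighborSet_multiCayleyGraph (one_notMem_cycleConn hS.one_notMem)]
  simp only [ncard_symmConn_cycleConn hS.inv_eq]
  exact Fintype.sum_equiv (Equiv.subRight p.2) _ _ fun j => rfl

theorem layerTriangles_cycleConn_self (hS : S⁻¹ = S) (i : ZMod m) :
    layerTriangles (symmConn (cycleConn S t x)) i i i = cayleyTriangleCount S S S := by
  rw [layerTriangles, symmConn_cycleConn_self hS]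

theorem layerTriangles_cycleConn_self_succ [Fact (1 < m)] (hS : S⁻¹ = S) (i : ZMod m) :
    layerTriangles (symmConn (cycleConn S t x)) i i (i + 1) =
      cayleyTriangleCount (crossConn t x i)⁻¹ (crossConn t x i)⁻¹ S := by
  rw [layerTriangles, symmConn_cycleConn_self hS, symmConn_cycleConn_succ,
    cayleyTriangleCount_comm, cayleyTriangleCount_inv_left]

theorem layerTriangles_cycleConn_succ_succ [Fact (1 < m)] (hS : S⁻¹ = S) (i : ZMod m) :
    layerTriangles (symmConn (cycleConn S t x)) i (i + 1) (i + 1) =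
      cayleyTriangleCount (crossConn t x i) (crossConn t x i) S := by
  rw [layerTriangles, symmConn_cycleConn_self hS, symmConn_cycleConn_succ]

theorem triangleCountOfLayer_cycleConn_eq_sum_near [NeZero m] (i : ZMod m) :
    triangleCountOfLayer (cycleConn S t x) i =
      ∑ j ∈ {i - 1, i, i + 1}, ∑ k ∈ {i - 1, i, i + 1},
        layerTriangles (symmConn (cycleConn S t x)) i j k := by
  rw [triangleCountOfLayer, sum_eq_sum_near_of_eq_zero i fun j h₁ h₂ h₃ =>
    Finset.sum_eq_zero fun k _ => by
      rw [layerTriangles, symmConn_cycleConn_eq_empty h₁ h₂ h₃, cayleyTriangleCount_empty_left]]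
  refine Finset.sum_congr rfl fun j _ => sum_eq_sum_near_of_eq_zero i fun k h₁ h₂ h₃ => ?_
  rw [layerTriangles, symmConn_cycleConn_eq_empty h₁ h₂ h₃, cayleyTriangleCount_empty_middle]

theorem triangleCountOfLayer_cycleConn_expand_of_two_lt [NeZero m] (hm : 2 < m) (hS : S⁻¹ = S)
    (i : ZMod m) :
    triangleCountOfLayer (cycleConn S t x) i =
      cayleyTriangleCount S S S
        + 2 * cayleyTriangleCount (crossConn t x i)⁻¹ (crossConn t x i)⁻¹ S
        + cayleyTriangleCount (crossConn t x i) (crossConn t x i) S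
        + cayleyTriangleCount (crossConn t x (i - 1))⁻¹ (crossConn t x (i - 1))⁻¹ S
        + 2 * cayleyTriangleCount (crossConn t x (i - 1)) (crossConn t x (i - 1)) S
        + 2 * layerTriangles (symmConn (cycleConn S t x)) i (i + 1) (i - 1) := by
  have : Fact (1 < m) := ⟨by omega⟩
  have h1 : (1 : ZMod m) ≠ 0 := one_ne_zero
  have h2 : (2 : ZMod m) ≠ 0 := by exact_mod_cast ZMod.natCast_ne_zero_of_lt two_pos hm
  have hmem : i - 1 ∉ ({i, i + 1} : Finset (ZMod m)) := by
    simp only [Finset.mem_insert, Finset.mem_singleton, not_or]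
    exact ⟨fun h => h1 (by linear_combination -h), fun h => h2 (by linear_combination -h)⟩
  have hne : i ≠ i + 1 := fun h => h1 (by linear_combination -h)
  have hpred := layerTriangles_cycleConn_self_succ (t := t) (x := x) hS (i - 1)
  have hpred' := layerTriangles_cycleConn_succ_succ (t := t) (x := x) hS (i - 1)
  rw [sub_add_cancel] at hpred hpred'
  rw [triangleCountOfLayer_cycleConn_eq_sum_near]
  simp only [Finset.sum_insert hmem, Finset.sum_pair hne]
  rw [layerTriangles_swap₂₃ _ i (i - 1) (i + 1), layerTriangles_swap₂₃ _ i i (i - 1),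
    layerTriangles_swap₂₃ _ i (i + 1) i, layerTriangles_swap₁₂ _ i (i - 1) i,
    layerTriangles_swap₁₂ _ i (i - 1) (i - 1), layerTriangles_swap₂₃ _ (i - 1) i (i - 1),
    layerTriangles_cycleConn_self hS, layerTriangles_cycleConn_self_succ hS,
    layerTriangles_cycleConn_succ_succ hS, hpred, hpred']
  ring

theorem triangleCountOfLayer_cycleConn_expand_two (hS : S⁻¹ = S) (i : ZMod 2) :
    triangleCountOfLayer (cycleConn S t x) i =
      cayleyTriangleCount S S S
        + 2 * cayleyTriangleCount (crossConn t x i)⁻¹ (crossConn t x i)⁻¹ S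
        + cayleyTriangleCount (crossConn t x i) (crossConn t x i) S := by
  have : Fact (1 < 2) := ⟨by norm_num⟩
  have h2 : (2 : ZMod 2) = 0 := rfl
  have hne : i ≠ i + 1 := fun h => one_ne_zero (by linear_combination -h : (1 : ZMod 2) = 0)
  rw [triangleCountOfLayer_cycleConn_eq_sum_near, show i - 1 = i + 1 by linear_combination -h2,
    Finset.insert_eq_of_mem (by simp)]
  simp only [Finset.sum_pair hne]
  rw [layerTriangles_swap₂₃ _ i (i + 1) i, layerTriangles_cycleConn_self hS,
    layerTriangles_cycleConn_self_succ hS, layerTriangles_cycleConn_succ_succ hS]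
  ring

theorem layerTriangles_cycleConn_succ_pred_eq (hm : 2 < m) (i j : ZMod m) :
    layerTriangles (symmConn (cycleConn S t x)) i (i + 1) (i - 1) =
      layerTriangles (symmConn (cycleConn S t x)) j (j + 1) (j - 1) := by
  rcases Nat.lt_or_ge 3 m with h4 | h3
  · have h1 : (1 : ZMod m) ≠ 0 := by exact_mod_cast ZMod.natCast_ne_zero_of_lt one_pos (by omega)
    have h2 : (2 : ZMod m) ≠ 0 := by exact_mod_cast ZMod.natCast_ne_zero_of_lt two_pos hm
    have h3 : (3 : ZMod m) ≠ 0 := by exact_mod_cast ZMod.natCast_ne_zero_of_lt three_pos h4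
    -- for `m ≥ 4` the layers `i + 1` and `i - 1` are not adjacent
    have hzero : ∀ i : ZMod m,
        layerTriangles (symmConn (cycleConn S t x)) i (i + 1) (i - 1) = 0 := fun i => by
      rw [layerTriangles, symmConn_cycleConn_eq_empty (i := i + 1) (j := i - 1)
        (fun h => h1 (by linear_combination -h)) (fun h => h2 (by linear_combination -h))
        (fun h => h3 (by linear_combination -h)), cayleyTriangleCount_empty_right]
    rw [hzero, hzero]
  · -- for `m = 3` the layers `i`, `i + 1`, `i - 1` are all three layers
    obtain rfl : m = 3 := by omega
    have h3 : (3 : ZMod 3) = 0 := rfl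
    have hstep : ∀ i : ZMod 3,
        layerTriangles (symmConn (cycleConn S t x)) (i + 1) (i + 1 + 1) (i + 1 - 1) =
          layerTriangles (symmConn (cycleConn S t x)) i (i + 1) (i - 1) := fun i => by
      rw [add_sub_cancel_right, show i + 1 + 1 = i - 1 by linear_combination h3,
        layerTriangles_swap₂₃, layerTriangles_swap₁₂]
    have hall : ∀ i : ZMod 3, layerTriangles (symmConn (cycleConn S t x)) i (i + 1) (i - 1) =
        layerTriangles (symmConn (cycleConn S t x)) (0 : ZMod 3) (0 + 1) (0 - 1) := fun i => by
      obtain rfl | rfl | rfl : i = 0 ∨ i = 0 + 1 ∨ i = 0 + 1 + 1 := by revert i; decide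
      · rfl
      · exact hstep 0
      · exact (hstep (0 + 1)).trans (hstep 0)
    rw [hall i, hall j]

theorem triangleCountOfLayer_cycleConn_eq_of_two_lt [NeZero m] (hm : 2 < m)
    (hS : IsGRRConnectionSet S) (hx : x ∈ S) (htx : t * x * t⁻¹ ∉ S) (i : ZMod m) :
    triangleCountOfLayer (cycleConn S t x) i =
      cayleyTriangleCount S S S + 6 * cayleyTriangleCount (crossSet t x)⁻¹ (crossSet t x)⁻¹ S
        + 2 * layerTriangles (symmConn (cycleConn S t x)) (0 : ZMod m) (0 + 1) (0 - 1)
        + if i = 0 then 4 else if i = 1 then 8 else 6 := by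
  have : Fact (1 < m) := ⟨by omega⟩
  have hE := cayleyTriangleCount_crossSet hS hx htx
  have hcc₀ : crossConn t x (0 : ZMod m) = crossSet t x := if_pos rfl
  have hcc : ∀ i : ZMod m, i ≠ 0 → crossConn t x i = (crossSet t x)⁻¹ := fun i hi => if_neg hi
  have h1 : (1 : ZMod m) ≠ 0 := one_ne_zero
  rw [triangleCountOfLayer_cycleConn_expand_of_two_lt hm hS.inv_eq,
    layerTriangles_cycleConn_succ_pred_eq hm i 0]
  by_cases hi₀ : i = 0
  · subst hi₀
    rw [hcc₀, hcc _ (by simp)]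
    simp only [inv_inv, hE, if_true]
    ring
  by_cases hi₁ : i = 1
  · subst hi₁
    rw [hcc _ h1, sub_self, hcc₀]
    simp only [inv_inv, hE, if_neg h1, if_true]
    ring
  · rw [hcc _ hi₀, hcc _ (fun h => hi₁ (by linear_combination h))]
    simp only [inv_inv, hE, if_neg hi₀, if_neg hi₁]
    ring

theorem triangleCountOfLayer_cycleConn_eq_of_eq_two (hS : IsGRRConnectionSet S) (hx : x ∈ S)
    (htx : t * x * t⁻¹ ∉ S) (i : ZMod 2) :
    triangleCountOfLayer (cycleConn S t x) i =
      cayleyTriangleCount S S S + 3 * cayleyTriangleCount (crossSet t x)⁻¹ (crossSet t x)⁻¹ S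
        + if i = 0 then 2 else 4 := by
  have hE := cayleyTriangleCount_crossSet hS hx htx
  rw [triangleCountOfLayer_cycleConn_expand_two hS.inv_eq]
  obtain rfl | rfl : i = 0 ∨ i = 1 := by revert i; decide
  · simp only [crossConn, hE, if_true]
    ring
  · simp only [crossConn, one_ne_zero, inv_inv, hE, if_false]
    ring

theorem triangleCountOfLayer_cycleConn_lt [NeZero m] [Fact (1 < m)] (hS : IsGRRConnectionSet S)
    (hx : x ∈ S) (htx : t * x * t⁻¹ ∉ S) :
    (∀ i : ZMod m, i ≠ 0 → triangleCountOfLayer (cycleConn S t x) (0 : ZMod m) <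
      triangleCountOfLayer (cycleConn S t x) i) ∧
    (∀ i : ZMod m, i ≠ 1 → triangleCountOfLayer (cycleConn S t x) i <
      triangleCountOfLayer (cycleConn S t x) (1 : ZMod m)) := by
  have h1 : (1 : ZMod m) ≠ 0 := one_ne_zero
  obtain hm | rfl : 2 < m ∨ m = 2 := by have := Fact.out (p := 1 < m); omega
  · simp only [triangleCountOfLayer_cycleConn_eq_of_two_lt hm hS hx htx, if_neg h1, ↓reduceIte]
    refine ⟨fun i hi => ?_, fun i hi => ?_⟩
    · simp only [if_neg hi]
      split_ifs <;> omega
    · simp only [if_neg hi]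
      split_ifs <;> omega
  · simp only [triangleCountOfLayer_cycleConn_eq_of_eq_two hS hx htx, if_neg h1, ↓reduceIte]
    refine ⟨fun i hi => ?_, fun i hi => ?_⟩
    · simp only [if_neg hi]
      omega
    · obtain rfl : i = 0 := by revert i; decide
      simp

theorem snd_apply_eq_of_isGraphAut_cycleConn [Finite H] [NeZero m] [Fact (1 < m)]
    (hS : IsGRRConnectionSet S) (hx : x ∈ S) (htx : t * x * t⁻¹ ∉ S)
    {σ : Equiv.Perm (H × ZMod m)} (hσ : IsGraphAut (multiCayleyGraph (cycleConn S t x)) σ)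
    (p : H × ZMod m) : (σ p).2 = p.2 := by
  have hD := one_notMem_cycleConn (m := m) (t := t) (x := x) hS.one_notMem
  have hT : ∀ p, triangleCountOfLayer (cycleConn S t x) (σ p).2 =
      triangleCountOfLayer (cycleConn S t x) p.2 := fun p => by
    rw [← triangleCountAt_multiCayleyGraph hD, ← triangleCountAt_multiCayleyGraph hD,
      SimpleGraph.triangleCountAt_apply hσ]
  obtain ⟨hlt₀, hlt₁⟩ := triangleCountOfLayer_cycleConn_lt (m := m) hS hx htx
  refine snd_apply_eq_of_snd_zero_one (fun p q hpq => ?_) (fun g i => ?_) hσ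
    (fun g => by_contra fun h => (hlt₀ _ h).ne (hT (g, 0)).symm)
    (fun g => by_contra fun h => (hlt₁ _ h).ne (hT (g, 1))) p
  · by_contra! h
    rw [multiCayleyGraph_adj hD, symmConn_cycleConn_eq_empty h.1 h.2.1 h.2.2] at hpq
    exact hpq
  · rw [multiCayleyGraph_adj hD, inv_mul_cancel, symmConn_cycleConn_succ_left, Set.mem_inv,
      inv_one]
    unfold crossConn
    split_ifs <;> simp [crossSet]

theorem isGraphAut_cycleConn_iff [Finite H] [NeZero m] [Fact (1 < m)] (hS : IsGRRConnectionSet S)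
    (hx : x ∈ S) (htx : t * x * t⁻¹ ∉ S) (σ : Equiv.Perm (H × ZMod m)) :
    IsGraphAut (multiCayleyGraph (cycleConn S t x)) σ ↔ ∃ c, layerMul c = σ := by
  have hD := one_notMem_cycleConn (m := m) (t := t) (x := x) hS.one_notMem
  refine ⟨fun hσ => ?_, fun ⟨c, hc⟩ => hc ▸ isGraphAut_layerMul hD c⟩
  have hlayer := snd_apply_eq_of_isGraphAut_cycleConn hS hx htx hσ
  choose c hc using fun i => exists_apply_eq_mul_of_isGraphAut hD hσ hlayer (i := i)
    (by rwa [symmConn_cycleConn_self hS.inv_eq])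
  have hstab := mul_mem_symmConn_iff_of_isGraphAut hD hσ fun g i => hc i g
  -- `crossSet t x` joins each pair of consecutive layers in one of the two directions
  have hsucc : ∀ i, c (i + 1) = c i := fun i => by
    by_cases hi : i = 0
    · refine (inv_mul_eq_one.1 (eq_one_of_mul_crossSet hS.one_notMem hx htx fun k => ?_)).symm
      have := hstab i (i + 1) k
      rwa [symmConn_cycleConn_succ, crossConn, if_pos hi] at this
    · refine inv_mul_eq_one.1 (eq_one_of_mul_crossSet hS.one_notMem hx htx fun k => ?_)
      have := hstab (i + 1) i k
      rwa [symmConn_cycleConn_succ_left, crossConn, if_neg hi, inv_inv] at this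
  have hconst : ∀ n : ℕ, c n = c 0 := fun n => by
    induction n with
    | zero => simp
    | succ n ih => rw [Nat.cast_succ, hsucc, ih]
  refine ⟨c 0, Equiv.ext fun ⟨g, i⟩ => ?_⟩
  obtain ⟨n, rfl⟩ := ZMod.natCast_zmod_surjective i
  rw [hc, hconst, layerMul_apply]

end Cycle

theorem hasMGRR_of_conj_notMem {H : Type} [Group H] [Finite H] {S : Set H}
    (hS : IsGRRConnectionSet S) {t x : H} (hx : x ∈ S) (htx : t * x * t⁻¹ ∉ S) {m : ℕ}
    (hm : 1 < m) : HasMGRR H m := by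
  have : Fact (1 < m) := ⟨hm⟩
  have : NeZero m := ⟨by omega⟩
  exact hasMGRR_of_isGraphAut_iff (ZMod.card m) _ (exists_ncard_neighborSet_cycleConn hS)
    (isGraphAut_cycleConn_iff hS hx htx)

/-- a non-abelian finite group admitting a GRR admits an m-GRR for every m ≥ 1. -/
theorem statement_9 (G : Type*) [Group G] [Finite G]
    (hG : ¬ ∀ a b : G, a * b = b * a)
    (hGRR : HasMGRR G 1) (m : ℕ) (hm : 1 ≤ m) :
    HasMGRR G m := by
  obtain rfl | hm := hm.eq_or_lt
  · exact hGRR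
  -- the vertex type of an `m`-GRR lives in `Type`, so pass to a copy of `G` in `Type`
  let e : Shrink.{0} G ≃* G := Shrink.mulEquiv
  obtain ⟨S, hS⟩ := IsGRRConnectionSet.exists_of_hasMGRR_one (hGRR.of_mulEquiv e.symm)
  obtain ⟨t, x, hx, htx⟩ := hS.exists_conj_notMem fun h =>
    hG fun a b => e.symm.injective (by simpa using h (e.symm a) (e.symm b))
  exact (hasMGRR_of_conj_notMem hS hx htx hm).of_mulEquiv e
end

section
/- Let G, R, L, S, T, x and m ≥ 3 be as in the Θᵐ(G,R,L,S,T,x) construction, and set Θ := Θᵐ(G,R,L,S,T,x). Suppose that (1) BiCay(G,R,L,S) is a 2-GRR for G, and (2) for each i ∈ {2,…,m−1}, the induced subgraph on the neighborhood of 1_0 in Θ is not isomorphic to the induced subgraph on the neighborhood of 1_i, and the induced subgraph on the neighborhood of 1_1 is not isomorphic to that on the neighborhood of 1_i. Then Θ is an m-GRR for G. -/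
/-- The bi-Cayley graph `BiCay(G,R,L,S)` on `G × {0,1}` with edges `{g_0,(rg)_0}` for
`r ∈ R`, `{g_1,(lg)_1}` for `l ∈ L`, and `{g_0,(sg)_1}` for `s ∈ S`. -/
def BiCay (G : Type*) [Group G] (R L S : Set G) : SimpleGraph (G × Fin 2) :=
  SimpleGraph.fromRel (fun p q =>
    (p.2.val = 0 ∧ q.2.val = 0 ∧ q.1 * p.1⁻¹ ∈ R) ∨
    (p.2.val = 1 ∧ q.2.val = 1 ∧ q.1 * p.1⁻¹ ∈ L) ∨
    (p.2.val = 0 ∧ q.2.val = 1 ∧ q.1 * p.1⁻¹ ∈ S))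

/-- The graph `Θᵐ(G,R,L,S,T,x)` on `G × {0,…,m−1}` with edges `{g_0,(rg)_0}` for `r ∈ R`;
`{g_1,(lg)_1}` for `l ∈ L`; `{g_0,(sg)_1}` for `s ∈ S`; `{g_i,(tg)_i}` for `t ∈ T`,
`2 ≤ i ≤ m−1`; `{g_i,g_{i+1}}` for `1 ≤ i ≤ m−2`; and `{g_0,(xg)_{m−1}}`. -/
def ThetaM (G : Type*) [Group G] (m : ℕ) (R L S T : Set G) (x : G) :
    SimpleGraph (G × Fin m) :=
  SimpleGraph.fromRel (fun p q =>
    (p.2.val = 0 ∧ q.2.val = 0 ∧ q.1 * p.1⁻¹ ∈ R) ∨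
    (p.2.val = 1 ∧ q.2.val = 1 ∧ q.1 * p.1⁻¹ ∈ L) ∨
    (p.2.val = 0 ∧ q.2.val = 1 ∧ q.1 * p.1⁻¹ ∈ S) ∨
    (2 ≤ p.2.val ∧ p.2 = q.2 ∧ q.1 * p.1⁻¹ ∈ T) ∨
    (1 ≤ p.2.val ∧ q.2.val = p.2.val + 1 ∧ q.1 = p.1) ∨
    (p.2.val = 0 ∧ q.2.val = m - 1 ∧ q.1 = x * p.1))

/-- Restriction of a graph automorphism to an iso of induced neighbourhood subgraphs. -/
def autNbhdIso {V : Type*} (Γ : SimpleGraph V) (σ : Equiv.Perm V) (h : IsGraphAut Γ σ)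
    (v : V) :
    Γ.induce (Γ.neighborSet v) ≃g Γ.induce (Γ.neighborSet (σ v)) where
  toFun w := ⟨σ w.1, (h v w.1).mpr w.2⟩
  invFun w := ⟨σ.symm w.1, by
    have h2 := h v (σ.symm w.1)
    rw [Equiv.apply_symm_apply] at h2
    exact h2.mp w.2⟩
  left_inv w := by simp
  right_inv w := by simp
  map_rel_iff' := by
    intro a b
    exact h a.1 b.1

/-- Right translation by `g` as a permutation of `G × Fin n`. -/
def rtEquiv (G : Type*) [Group G] (n : ℕ) (g : G) : Equiv.Perm (G × Fin n) where
  toFun p := (p.1 * g, p.2)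
  invFun p := (p.1 * g⁻¹, p.2)
  left_inv p := by simp
  right_inv p := by simp

theorem thetaTranslAdj (G : Type*) [Group G] (m : ℕ) (R L S T : Set G) (x : G) (g : G)
    (p q : G × Fin m) :
    (ThetaM G m R L S T x).Adj (p.1 * g, p.2) (q.1 * g, q.2) ↔
      (ThetaM G m R L S T x).Adj p q := by
  have key : ∀ a b : G, a * g * (b * g)⁻¹ = a * b⁻¹ := fun a b => by group
  have key2 : ∀ a b : G, (a * g = x * (b * g)) ↔ a = x * b := fun a b => by
    rw [← mul_assoc, mul_left_inj]
  simp only [ThetaM, SimpleGraph.fromRel_adj, key, key2, Ne, Prod.ext_iff, mul_left_inj]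

theorem thetaTranslAut (G : Type*) [Group G] (m : ℕ) (R L S T : Set G) (x : G) (g : G) :
    IsGraphAut (ThetaM G m R L S T x) (rtEquiv G m g) := fun p q =>
  thetaTranslAdj G m R L S T x g p q

/-- The projection `G × Fin m → G × Fin 2` collapsing all levels `≥ 1` to `1`. -/
def prV {G : Type*} (m : ℕ) (hm : 3 ≤ m) (v : G × Fin m) : G × Fin 2 :=
  (v.1, ⟨min v.2.val 1, by omega⟩)

/-- The embedding `G × Fin 2 → G × Fin m`. -/
def embV {G : Type*} (m : ℕ) (hm : 3 ≤ m) (p : G × Fin 2) : G × Fin m :=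
  (p.1, ⟨p.2.val, by omega⟩)

theorem prV_embV {G : Type*} (m : ℕ) (hm : 3 ≤ m) (p : G × Fin 2) :
    prV m hm (embV m hm p) = p := by
  obtain ⟨a, i⟩ := p
  simp only [prV, embV, Prod.mk.injEq, true_and]
  exact Fin.ext (by simpa using Nat.min_eq_left (by omega : i.val ≤ 1))

theorem embV_prV {G : Type*} (m : ℕ) (hm : 3 ≤ m) (v : G × Fin m) (hv : v.2.val ≤ 1) :
    embV m hm (prV m hm v) = v := by
  obtain ⟨a, i⟩ := v
  simp only [prV, embV, Prod.mk.injEq, true_and]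
  exact Fin.ext (by simpa using Nat.min_eq_left hv)

/-- On the first two levels, `ThetaM` restricts to `BiCay`. -/
theorem bridge {G : Type*} [Group G] (m : ℕ) (hm : 3 ≤ m) (R L S T : Set G) (x : G)
    (v w : G × Fin m) (hv : v.2.val ≤ 1) (hw : w.2.val ≤ 1) :
    (BiCay G R L S).Adj (prV m hm v) (prV m hm w) ↔ (ThetaM G m R L S T x).Adj v w := by
  obtain ⟨a, i⟩ := v
  obtain ⟨b, j⟩ := w
  simp only at hv hw
  have hi : min i.val 1 = i.val := Nat.min_eq_left hv
  have hj : min j.val 1 = j.val := Nat.min_eq_left hw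
  simp only [BiCay, ThetaM, SimpleGraph.fromRel_adj, prV, Ne, Prod.ext_iff, Fin.ext_iff,
    hi, hj]
  constructor
  · rintro ⟨hne, hrel⟩
    refine ⟨fun hc => hne ⟨hc.1, hc.2⟩, ?_⟩
    rcases hrel with (⟨h1, h2, h3⟩ | ⟨h1, h2, h3⟩ | ⟨h1, h2, h3⟩) |
      (⟨h1, h2, h3⟩ | ⟨h1, h2, h3⟩ | ⟨h1, h2, h3⟩)
    · exact Or.inl (Or.inl ⟨h1, h2, h3⟩)
    · exact Or.inl (Or.inr (Or.inl ⟨h1, h2, h3⟩))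
    · exact Or.inl (Or.inr (Or.inr (Or.inl ⟨h1, h2, h3⟩)))
    · exact Or.inr (Or.inl ⟨h1, h2, h3⟩)
    · exact Or.inr (Or.inr (Or.inl ⟨h1, h2, h3⟩))
    · exact Or.inr (Or.inr (Or.inr (Or.inl ⟨h1, h2, h3⟩)))
  · rintro ⟨hne, hrel⟩
    refine ⟨fun hc => hne ⟨hc.1, hc.2⟩, ?_⟩
    rcases hrel with (⟨h1, h2, h3⟩ | ⟨h1, h2, h3⟩ | ⟨h1, h2, h3⟩ |
      ⟨h1, h2, h3⟩ | ⟨h1, h2, h3⟩ | ⟨h1, h2, h3⟩) |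
      (⟨h1, h2, h3⟩ | ⟨h1, h2, h3⟩ | ⟨h1, h2, h3⟩ |
      ⟨h1, h2, h3⟩ | ⟨h1, h2, h3⟩ | ⟨h1, h2, h3⟩)
    · exact Or.inl (Or.inl ⟨h1, h2, h3⟩)
    · exact Or.inl (Or.inr (Or.inl ⟨h1, h2, h3⟩))
    · exact Or.inl (Or.inr (Or.inr ⟨h1, h2, h3⟩))
    · omega
    · omega
    · omega
    · exact Or.inr (Or.inl ⟨h1, h2, h3⟩)
    · exact Or.inr (Or.inr (Or.inl ⟨h1, h2, h3⟩))
    · exact Or.inr (Or.inr (Or.inr ⟨h1, h2, h3⟩))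
    · omega
    · omega
    · omega
/-- if `BiCay(G,R,L,S)` is a 2-GRR and the neighbourhood subgraphs of `1_0`
and `1_1` in `Θ := Θᵐ(G,R,L,S,T,x)` are not isomorphic to the neighbourhood subgraph of
any `1_i` with `2 ≤ i ≤ m−1`, then `Θ` is an m-GRR for `G` (its full automorphism group
is the semiregular group of right translations by `G`). -/
theorem statement_10 (G : Type*) [Group G] [Finite G]
    (m : ℕ) (hm : 3 ≤ m)
    (R L S T : Set G)
    (h1R : (1 : G) ∉ R) (hRinv : ∀ r ∈ R, r⁻¹ ∈ R)
    (h1L : (1 : G) ∉ L) (hLinv : ∀ l ∈ L, l⁻¹ ∈ L)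
    (h1T : (1 : G) ∉ T) (hTinv : ∀ t ∈ T, t⁻¹ ∈ T)
    (hcard : R.ncard = L.ncard ∧ R.ncard + S.ncard = T.ncard + 1)
    (x : G) (hx : x ∉ S)
    (h2grr : (∀ (g : G) (p q : G × Fin 2),
        (BiCay G R L S).Adj (p.1 * g, p.2) (q.1 * g, q.2) ↔ (BiCay G R L S).Adj p q) ∧
      (∀ σ : Equiv.Perm (G × Fin 2), IsGraphAut (BiCay G R L S) σ →
        ∃ g : G, ∀ p : G × Fin 2, σ p = (p.1 * g, p.2)))
    (hnbhd : ∀ i : Fin m, 2 ≤ i.val →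
      ¬ Nonempty
        ((ThetaM G m R L S T x).induce
            ((ThetaM G m R L S T x).neighborSet ((1 : G), (⟨0, by omega⟩ : Fin m))) ≃g
          (ThetaM G m R L S T x).induce
            ((ThetaM G m R L S T x).neighborSet ((1 : G), i))) ∧
      ¬ Nonempty
        ((ThetaM G m R L S T x).induce
            ((ThetaM G m R L S T x).neighborSet ((1 : G), (⟨1, by omega⟩ : Fin m))) ≃g
          (ThetaM G m R L S T x).induce
            ((ThetaM G m R L S T x).neighborSet ((1 : G), i)))) :
    (∀ (g : G) (p q : G × Fin m),
        (ThetaM G m R L S T x).Adj (p.1 * g, p.2) (q.1 * g, q.2) ↔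
          (ThetaM G m R L S T x).Adj p q) ∧
      (∀ σ : Equiv.Perm (G × Fin m), IsGraphAut (ThetaM G m R L S T x) σ →
        ∃ g : G, ∀ p : G × Fin m, σ p = (p.1 * g, p.2)) := by
  constructor
  · exact fun g p q => thetaTranslAdj G m R L S T x g p q
  · intro σ hσ
    set Θ := ThetaM G m R L S T x with hΘ
    -- Step A: automorphisms preserve the first two levels
    have hA : ∀ τ : Equiv.Perm (G × Fin m), IsGraphAut Θ τ →
        ∀ v : G × Fin m, v.2.val ≤ 1 → (τ v).2.val ≤ 1 := by
      intro τ hτ v hv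
      by_contra hge
      push_neg at hge
      -- chain of neighbourhood isos
      have haut1 : IsGraphAut Θ (rtEquiv G m v.1) := thetaTranslAut G m R L S T x v.1
      have haut3 : IsGraphAut Θ (rtEquiv G m (τ v).1⁻¹) :=
        thetaTranslAut G m R L S T x (τ v).1⁻¹
      have iso1 := autNbhdIso Θ (rtEquiv G m v.1) haut1 ((1 : G), v.2)
      have e1 : rtEquiv G m v.1 ((1 : G), v.2) = v := by
        simp [rtEquiv]
      rw [e1] at iso1
      have iso2 := autNbhdIso Θ τ hτ v
      have iso3 := autNbhdIso Θ (rtEquiv G m (τ v).1⁻¹) haut3 (τ v)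
      have e3 : rtEquiv G m (τ v).1⁻¹ (τ v) = ((1 : G), (τ v).2) := by
        simp [rtEquiv]
      rw [e3] at iso3
      have full := (iso1.trans iso2).trans iso3
      have hnb := hnbhd (τ v).2 hge
      rcases Nat.le_one_iff_eq_zero_or_eq_one.mp hv with h0 | h1
      · rw [show v.2 = (⟨0, by omega⟩ : Fin m) from Fin.ext h0] at full
        exact hnb.1 ⟨full⟩
      · rw [show v.2 = (⟨1, by omega⟩ : Fin m) from Fin.ext h1] at full
        exact hnb.2 ⟨full⟩
    -- Step B: σ.symm is an automorphism
    have hsymm : IsGraphAut Θ σ.symm := fun u v => by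
      have := hσ (σ.symm u) (σ.symm v)
      simpa using this.symm
    have hemb : ∀ p : G × Fin 2, (embV m hm p).2.val ≤ 1 := by
      intro p
      have := p.2.isLt
      simp only [embV]
      omega
    have hστ : ∀ p : G × Fin 2, (σ (embV m hm p)).2.val ≤ 1 :=
      fun p => hA σ hσ (embV m hm p) (hemb p)
    have hστ' : ∀ p : G × Fin 2, (σ.symm (embV m hm p)).2.val ≤ 1 :=
      fun p => hA σ.symm hsymm (embV m hm p) (hemb p)
    -- Step C: the restricted permutation of G × Fin 2
    let τ : Equiv.Perm (G × Fin 2) :=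
      { toFun := fun p => prV m hm (σ (embV m hm p))
        invFun := fun p => prV m hm (σ.symm (embV m hm p))
        left_inv := by
          intro p
          show prV m hm (σ.symm (embV m hm (prV m hm (σ (embV m hm p))))) = p
          rw [embV_prV m hm _ (hστ p), Equiv.symm_apply_apply, prV_embV]
        right_inv := by
          intro p
          show prV m hm (σ (embV m hm (prV m hm (σ.symm (embV m hm p))))) = p
          rw [embV_prV m hm _ (hστ' p), Equiv.apply_symm_apply, prV_embV] }
    have hτaut : IsGraphAut (BiCay G R L S) τ := by
      intro p q
      show (BiCay G R L S).Adj (prV m hm (σ (embV m hm p)))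
          (prV m hm (σ (embV m hm q))) ↔ _
      rw [bridge m hm R L S T x _ _ (hστ p) (hστ q)]
      rw [show (ThetaM G m R L S T x) = Θ from rfl, hσ,
        show Θ = ThetaM G m R L S T x from rfl]
      rw [← bridge m hm R L S T x _ _ (hemb p) (hemb q), prV_embV, prV_embV]
    obtain ⟨g₀, hg₀⟩ := h2grr.2 τ hτaut
    -- Step D: σ is translation by g₀ on the first two levels
    have hbase : ∀ v : G × Fin m, v.2.val ≤ 1 → σ v = (v.1 * g₀, v.2) := by
      intro v hv
      have h1 := hg₀ (prV m hm v)
      have h2 : τ (prV m hm v) = prV m hm (σ v) := by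
        show prV m hm (σ (embV m hm (prV m hm v))) = _
        rw [embV_prV m hm v hv]
      rw [h2] at h1
      have h3 : embV m hm (prV m hm (σ v)) = σ v := embV_prV m hm _ (hA σ hσ v hv)
      rw [h1] at h3
      rw [← h3]
      simp [embV, prV, Prod.ext_iff, Fin.ext_iff, Nat.min_eq_left hv]
    -- Step E: induction up the levels
    have key : ∀ k : ℕ, ∀ hk : k < m, ∀ c : G, σ (c, ⟨k, hk⟩) = (c * g₀, ⟨k, hk⟩) := by
      intro k
      induction k using Nat.strong_induction_on with
      | _ k IH =>
        intro hk c
        rcases le_or_gt k 1 with hk1 | hk1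
        · exact hbase (c, ⟨k, hk⟩) hk1
        · obtain ⟨j, rfl⟩ : ∃ j, k = j + 1 := ⟨k - 1, by omega⟩
          have hj : 1 ≤ j := by omega
          have hjm : j < m := by omega
          have hadj : Θ.Adj (c, ⟨j, hjm⟩) (c, ⟨j + 1, hk⟩) := by
            rw [hΘ, ThetaM, SimpleGraph.fromRel_adj]
            refine ⟨fun hc => ?_, Or.inl (Or.inr (Or.inr (Or.inr (Or.inr
              (Or.inl ⟨hj, rfl, rfl⟩)))))⟩
            have h' := congrArg (fun p : G × Fin m => p.2.val) hc
            simp only at h'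
            omega
          have hadj2 : Θ.Adj (c * g₀, ⟨j, hjm⟩) (σ (c, ⟨j + 1, hk⟩)) := by
            rw [← IH j (by omega) hjm c]
            exact (hσ _ _).mpr hadj
          set w := σ (c, ⟨j + 1, hk⟩) with hw
          have hcases : w.2.val ≤ j ∨ (w.2.val = j + 1 ∧ w.1 = c * g₀) := by
            rw [hΘ, ThetaM, SimpleGraph.fromRel_adj] at hadj2
            obtain ⟨-, hrel⟩ := hadj2
            rcases hrel with (⟨h1, h2, h3⟩ | ⟨h1, h2, h3⟩ | ⟨h1, h2, h3⟩ |
              ⟨h1, h2, h3⟩ | ⟨h1, h2, h3⟩ | ⟨h1, h2, h3⟩) |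
              (⟨h1, h2, h3⟩ | ⟨h1, h2, h3⟩ | ⟨h1, h2, h3⟩ |
              ⟨h1, h2, h3⟩ | ⟨h1, h2, h3⟩ | ⟨h1, h2, h3⟩)
            · simp only at h1; omega
            · simp only at h1 h2; omega
            · simp only at h1; omega
            · rw [Fin.ext_iff] at h2; simp only at h2; omega
            · simp only at h2 h3; exact Or.inr ⟨h2, h3⟩
            · simp only at h1; omega
            · simp only at h1 h2; omega
            · simp only at h1 h2; omega
            · simp only at h1 h2; omega
            · rw [Fin.ext_iff] at h2; simp only at h2; omega
            · simp only at h1 h2; omega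
            · simp only at h1 h2; omega
          rcases hcases with hle | ⟨hv2, hv1⟩
          · exfalso
            have h4 := IH w.2.val (by omega) (by omega) (w.1 * g₀⁻¹)
            have h5 : σ (w.1 * g₀⁻¹, ⟨w.2.val, by omega⟩) = w := by
              rw [h4]
              simp [Prod.ext_iff, Fin.ext_iff]
            have h6 : (c, (⟨j + 1, hk⟩ : Fin m)) = (w.1 * g₀⁻¹, ⟨w.2.val, by omega⟩) :=
              σ.injective (by rw [h5, hw])
            have h7 := congrArg (fun p => p.2.val) h6
            simp only at h7
            omega
          · rw [hw]
            exact Prod.ext hv1 (Fin.ext hv2)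
    refine ⟨g₀, fun p => ?_⟩
    have := key p.2.val p.2.isLt p.1
    simpa using this
end
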